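/- arXiv:cond-mat/0610663 — 4 statements merged into one kernel-verified Lean document; each statement's English description precedes it below -/
import Mathlib

section
/- Fix p \in (0,1] and q := 1-p. For every y \in \mathbb{R}, \lim_{N\to\infty} (1/N) \log E[\exp(y S_N) \, ; \, S_n \ne 0 \text{ for all } n = 1, \dots, N] = \log(p\cosh(y) + q). -/
open Filter Finset

noncomputable section
open scoped Classical

/-- The three possible increments of the `(p,q)`-walk: `-1, 0, +1`. -/
def step : Fin 3 → ℤ := ![-1, 0, 1]

/-- The probability weights of the three increments: `p/2, q = 1-p, p/2`. -/
def wt (p : ℝ) : Fin 3 → ℝ := ![p / 2, 1 - p, p / 2]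

/-- Position of the walk after `n` steps, given the increments `ξ`. -/
def pos {N : ℕ} (ξ : Fin N → Fin 3) (n : ℕ) : ℤ :=
  ∑ i : Fin N, if (i : ℕ) < n then step (ξ i) else 0

/-- Probability weight of the path with increments `ξ`. -/
def pwt (p : ℝ) {N : ℕ} (ξ : Fin N → Fin 3) : ℝ := ∏ i : Fin N, wt p (ξ i)

/-- The pinning partition function `Z_{N,ω}^{β,f}` of the `(p,q)`-walk with
charges `ω`, inverse temperature `β` and force `f`. -/
def Z (p : ℝ) (ω : ℕ → ℝ) (β f : ℝ) (N : ℕ) : ℝ :=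
  ∑ ξ : Fin N → Fin 3,
    pwt p ξ *
      Real.exp (β * ∑ n ∈ Finset.Icc 1 N, (if pos ξ n = 0 then ω n else 0)
        + β * f * ((pos ξ N : ℤ) : ℝ))

/-- `g(y) = log (p cosh y + q)`. -/
def g (p y : ℝ) : ℝ := Real.log (p * Real.cosh y + (1 - p))

/-- `E[exp(y S_N); S_n ≠ 0 for n = 1, …, N]`. -/
def Zfree (p y : ℝ) (N : ℕ) : ℝ :=
  ∑ ξ : Fin N → Fin 3,
    if ∀ n ∈ Finset.Icc 1 N, pos ξ n ≠ 0 then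
      pwt p ξ * Real.exp (y * ((pos ξ N : ℤ) : ℝ))
    else 0

/-!
Write `λ = p cosh y + q = E[exp (y S₁)]`. Dropping the constraint gives `Zfree ≤ λ^N`, and
`Zfree` is even in `y`, so let `y ≥ 0`. Of the total tilted mass `λ^N`, the part ending below `0`
is dominated by its reflection, which ends above `0`, and the part ending at `0` is at most
`max(q, p/2)`, so paths ending at positive height carry at least `c λ^N` for some `c > 0`.
By the cycle lemma, some cyclic rotation of the increments of such a path stays strictly positive
at all times `1, …, N`; rotations preserve the tilted weight, so this mass is at most `N` times
the mass of strictly positive paths, which is at most `Zfree`. Thus `c λ^N / N ≤ Zfree ≤ λ^N`.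
-/

theorem exists_forall_partialSum_lt {N : ℕ} (a : ℕ → ℤ) (ha : ∀ i, a (i + N) = a i)
    (hsum : 0 < ∑ i ∈ range N, a i) :
    ∃ r < N, ∀ n ∈ Icc 1 N, ∑ i ∈ range r, a i < ∑ i ∈ range (r + n), a i := by
  set T : ℕ → ℤ := fun n => ∑ i ∈ range n, a i
  have hT : ∀ j, T (N + j) = T N + T j := fun j => by
    simp only [T, sum_range_add]
    exact congrArg _ (sum_congr rfl fun i _ => by rw [add_comm, ha])
  -- `r` is the last place where `T` attains its minimum over `[0, N]`.
  set IsMin : ℕ → Prop := fun j => ∀ k ≤ N, T j ≤ T k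
  obtain ⟨j₀, hj₀, hj₀min⟩ := exists_min_image (range (N + 1)) T ⟨0, by simp⟩
  have hj₀N : j₀ ≤ N := Nat.lt_succ_iff.1 (mem_range.1 hj₀)
  set r := Nat.findGreatest IsMin N
  have hr : IsMin r :=
    Nat.findGreatest_spec hj₀N fun k hk => hj₀min k (mem_range.2 (Nat.lt_succ_of_le hk))
  have hrN : r < N := by
    refine lt_of_le_of_ne (Nat.findGreatest_le N) fun h => ?_
    have := hr 0 (Nat.zero_le _)
    simp only [h, T, range_zero, sum_empty] at this
    exact this.not_gt hsum
  refine ⟨r, hrN, fun n hn => ?_⟩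
  rw [mem_Icc] at hn
  change T r < T (r + n)
  by_cases hrn : r + n ≤ N
  · refine lt_of_le_of_ne (hr _ hrn) fun heq => ?_
    exact Nat.findGreatest_is_greatest (P := IsMin) (by omega) hrn fun k hk => heq ▸ hr k hk
  · have := hT (r + n - N)
    rw [Nat.add_sub_cancel' (by omega)] at this
    have := hr (r + n - N) (by omega)
    change 0 < T N at hsum
    omega

theorem tendsto_log_div_of_le_of_le {Z : ℕ → ℝ} {lam c : ℝ} (hlam : 0 < lam) (hc : 0 < c)
    (hlow : ∀ᶠ N : ℕ in atTop, c * lam ^ N / N ≤ Z N) (hup : ∀ N, Z N ≤ lam ^ N) :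
    Tendsto (fun N : ℕ => Real.log (Z N) / N) atTop (nhds (Real.log lam)) := by
  have hlog : Tendsto (fun N : ℕ => Real.log N / N) atTop (nhds 0) :=
    Real.isLittleO_log_id_atTop.tendsto_div_nhds_zero.comp tendsto_natCast_atTop_atTop
  have hlim : Tendsto (fun N : ℕ => Real.log lam + Real.log c / N - Real.log N / N) atTop
      (nhds (Real.log lam)) := by
    simpa using ((tendsto_const_div_atTop_nhds_zero_nat (Real.log c)).const_add
      (Real.log lam)).sub hlog
  refine tendsto_of_tendsto_of_tendsto_of_le_of_le' hlim tendsto_const_nhds ?_ ?_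
  · filter_upwards [hlow, eventually_gt_atTop 0] with N hN hN0
    have hN0' : (0 : ℝ) < N := Nat.cast_pos.2 hN0
    have := Real.log_le_log (by positivity) hN
    rw [Real.log_div (by positivity) hN0'.ne', Real.log_mul hc.ne' (by positivity),
      Real.log_pow] at this
    rw [le_div_iff₀ hN0']
    field_simp
    linarith
  · filter_upwards [hlow, eventually_gt_atTop 0] with N hN hN0
    have hN0' : (0 : ℝ) < N := Nat.cast_pos.2 hN0
    have hZ : 0 < Z N := lt_of_lt_of_le (by positivity) hN
    rw [div_le_iff₀ hN0', mul_comm, ← Real.log_pow]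
    exact Real.log_le_log hZ (hup N)

def tilted (p y : ℝ) {N : ℕ} (ξ : Fin N → Fin 3) : ℝ := pwt p ξ * Real.exp (y * pos ξ N)

theorem Zfree_eq_sum_ite (p y : ℝ) (N : ℕ) :
    Zfree p y N = ∑ ξ : Fin N → Fin 3, if ∀ n ∈ Icc 1 N, pos ξ n ≠ 0 then tilted p y ξ else 0 :=
  rfl

section Walk

variable {p : ℝ} {N : ℕ}

theorem wt_nonneg (hp : 0 ≤ p) (hp1 : p ≤ 1) (j : Fin 3) : 0 ≤ wt p j := by
  fin_cases j <;> simp [wt] <;> linarith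

theorem tilted_nonneg (hp : 0 ≤ p) (hp1 : p ≤ 1) (y : ℝ) (ξ : Fin N → Fin 3) :
    0 ≤ tilted p y ξ :=
  mul_nonneg (prod_nonneg fun _ _ => wt_nonneg hp hp1 _) (Real.exp_nonneg _)

theorem pos_self (ξ : Fin N → Fin 3) : pos ξ N = ∑ i, step (ξ i) :=
  sum_congr rfl fun i _ => if_pos i.isLt

theorem tilted_eq_prod (y : ℝ) (ξ : Fin N → Fin 3) :
    tilted p y ξ = ∏ i, wt p (ξ i) * Real.exp (y * step (ξ i)) := by
  simp only [tilted, pwt, pos_self, prod_mul_distrib, Int.cast_sum, mul_sum, Real.exp_sum]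

theorem sum_tilted (p y : ℝ) (N : ℕ) :
    ∑ ξ : Fin N → Fin 3, tilted p y ξ = (p * Real.cosh y + (1 - p)) ^ N := by
  have hstep : ∑ j, wt p j * Real.exp (y * step j) = p * Real.cosh y + (1 - p) := by
    simp [Fin.sum_univ_three, wt, step, Real.cosh_eq]
    ring
  simp_rw [tilted_eq_prod]
  rw [← hstep, ← Fin.prod_const, Fintype.prod_sum]

end Walk

section Reflection

variable {p : ℝ} {N : ℕ}

theorem step_rev (j : Fin 3) : step j.rev = -step j := by
  fin_cases j <;> rfl

theorem wt_rev (j : Fin 3) : wt p j.rev = wt p j := by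
  fin_cases j <;> rfl

theorem pos_rev (ξ : Fin N → Fin 3) (n : ℕ) : pos (fun i => (ξ i).rev) n = -pos ξ n := by
  simp only [pos, step_rev, ← sum_neg_distrib, apply_ite Neg.neg, neg_zero]

theorem tilted_rev (y : ℝ) (ξ : Fin N → Fin 3) :
    tilted p y (fun i => (ξ i).rev) = tilted p (-y) ξ := by
  simp only [tilted, pwt, wt_rev, pos_rev, Int.cast_neg, mul_neg, neg_mul]

theorem sum_comp_rev {M : Type*} [AddCommMonoid M] (f : (Fin N → Fin 3) → M) :
    ∑ ξ : Fin N → Fin 3, f (fun i => (ξ i).rev) = ∑ ξ, f ξ :=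
  Fintype.sum_equiv (Equiv.piCongrRight fun _ => Fin.revPerm) _ _ fun _ => rfl

theorem Zfree_neg (p y : ℝ) (N : ℕ) : Zfree p (-y) N = Zfree p y N := by
  rw [Zfree_eq_sum_ite, Zfree_eq_sum_ite, ← sum_comp_rev]
  simp [pos_rev, tilted_rev]

end Reflection

section PointMass

variable {p : ℝ}

theorem sum_fun_fin_succ {α M : Type*} [Fintype α] [AddCommMonoid M] {K : ℕ}
    (f : (Fin (K + 1) → α) → M) : ∑ ξ, f ξ = ∑ j, ∑ η, f (Fin.cons j η) :=
  (Fintype.sum_equiv (Fin.consEquiv _) _ _ fun _ => rfl).symm.trans (Fintype.sum_prod_type _)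

theorem pwt_cons {K : ℕ} (j : Fin 3) (η : Fin K → Fin 3) :
    pwt p (Fin.cons j η) = wt p j * pwt p η := by
  simp [pwt, Fin.prod_univ_succ]

theorem pos_cons {K : ℕ} (j : Fin 3) (η : Fin K → Fin 3) :
    pos (Fin.cons j η : Fin (K + 1) → Fin 3) (K + 1) = step j + pos η K := by
  simp [pos_self, Fin.sum_univ_succ]

theorem sum_pwt (p : ℝ) (N : ℕ) : ∑ ξ : Fin N → Fin 3, pwt p ξ = 1 := by
  simpa [tilted] using sum_tilted p 0 N

theorem step_injective : Function.Injective step := by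
  decide

theorem wt_le_max (j : Fin 3) : wt p j ≤ max (1 - p) (p / 2) := by
  fin_cases j <;> simp [wt]

theorem sum_wt_of_step_eq_le (hp : 0 ≤ p) (m : ℤ) :
    ∑ j with step j = m, wt p j ≤ max (1 - p) (p / 2) := by
  have hcard : #{j | step j = m} ≤ 1 := card_le_one.2 fun a ha b hb =>
    step_injective ((mem_filter.1 ha).2.trans (mem_filter.1 hb).2.symm)
  calc ∑ j with step j = m, wt p j
      ≤ #{j | step j = m} • max (1 - p) (p / 2) := sum_le_card_nsmul _ _ _ fun j _ => wt_le_max j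
    _ ≤ 1 • max (1 - p) (p / 2) := by gcongr
    _ = max (1 - p) (p / 2) := one_nsmul _

theorem sum_pwt_of_pos_eq_le (hp : 0 ≤ p) (hp1 : p ≤ 1) {K : ℕ} (k : ℤ) :
    ∑ ξ : Fin (K + 1) → Fin 3 with pos ξ (K + 1) = k, pwt p ξ ≤ max (1 - p) (p / 2) := by
  calc ∑ ξ : Fin (K + 1) → Fin 3 with pos ξ (K + 1) = k, pwt p ξ
      = ∑ η : Fin K → Fin 3, pwt p η * ∑ j with step j = k - pos η K, wt p j := by
        rw [sum_filter, sum_fun_fin_succ, sum_comm]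
        refine sum_congr rfl fun η _ => ?_
        rw [sum_filter, mul_sum]
        refine sum_congr rfl fun j _ => ?_
        simp only [pwt_cons, pos_cons, eq_sub_iff_add_eq, mul_ite, mul_zero, mul_comm]
    _ ≤ ∑ η : Fin K → Fin 3, pwt p η * max (1 - p) (p / 2) :=
        sum_le_sum fun η _ => mul_le_mul_of_nonneg_left (sum_wt_of_step_eq_le hp _)
          (prod_nonneg fun _ _ => wt_nonneg hp hp1 _)
    _ = max (1 - p) (p / 2) := by rw [← sum_mul, sum_pwt, one_mul]

end PointMass

section Tilted

variable {p y : ℝ}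

theorem one_le_mul_cosh_add_one_sub (hp : 0 ≤ p) (y : ℝ) : 1 ≤ p * Real.cosh y + (1 - p) := by
  nlinarith [Real.one_le_cosh y]

theorem sum_tilted_neg_end_le (hp : 0 ≤ p) (hp1 : p ≤ 1) (hy : 0 ≤ y) (N : ℕ) :
    ∑ ξ : Fin N → Fin 3 with pos ξ N < 0, tilted p y ξ
      ≤ ∑ ξ : Fin N → Fin 3 with 0 < pos ξ N, tilted p y ξ := by
  rw [sum_filter, ← sum_comp_rev, sum_filter]
  refine sum_le_sum fun ξ _ => ?_
  simp only [pos_rev, Left.neg_neg_iff, tilted_rev]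
  split_ifs with h
  · refine mul_le_mul_of_nonneg_left (Real.exp_le_exp.2 ?_)
      (prod_nonneg fun _ _ => wt_nonneg hp hp1 _)
    have : (0 : ℝ) < pos ξ N := by exact_mod_cast h
    nlinarith
  · exact le_rfl

theorem sum_tilted_zero_end_le (hp : 0 ≤ p) (hp1 : p ≤ 1) (K : ℕ) :
    ∑ ξ : Fin (K + 1) → Fin 3 with pos ξ (K + 1) = 0, tilted p y ξ ≤ max (1 - p) (p / 2) := by
  calc ∑ ξ : Fin (K + 1) → Fin 3 with pos ξ (K + 1) = 0, tilted p y ξ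
      = ∑ ξ : Fin (K + 1) → Fin 3 with pos ξ (K + 1) = 0, pwt p ξ :=
        sum_congr rfl fun ξ hξ => by simp [tilted, (mem_filter.1 hξ).2]
    _ ≤ max (1 - p) (p / 2) := sum_pwt_of_pos_eq_le hp hp1 0

theorem le_sum_tilted_pos_end (hp : 0 ≤ p) (hp1 : p ≤ 1) (hy : 0 ≤ y) (K : ℕ) :
    (1 - max (1 - p) (p / 2)) / 2 * (p * Real.cosh y + (1 - p)) ^ (K + 1)
      ≤ ∑ ξ : Fin (K + 1) → Fin 3 with 0 < pos ξ (K + 1), tilted p y ξ := by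
  have htot : (p * Real.cosh y + (1 - p)) ^ (K + 1)
      = ∑ ξ : Fin (K + 1) → Fin 3 with pos ξ (K + 1) < 0, tilted p y ξ
        + ∑ ξ : Fin (K + 1) → Fin 3 with pos ξ (K + 1) = 0, tilted p y ξ
        + ∑ ξ : Fin (K + 1) → Fin 3 with 0 < pos ξ (K + 1), tilted p y ξ := by
    simp only [← sum_tilted p y, sum_filter, ← sum_add_distrib]
    refine sum_congr rfl fun ξ _ => ?_
    rcases lt_trichotomy (pos ξ (K + 1)) 0 with h | h | h
    · simp [h, lt_asymm h, h.ne]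
    · simp [h]
    · simp [h, lt_asymm h, h.ne']
  have hpow : 1 ≤ (p * Real.cosh y + (1 - p)) ^ (K + 1) :=
    one_le_pow₀ (one_le_mul_cosh_add_one_sub hp y)
  have hM : 0 ≤ max (1 - p) (p / 2) := le_max_of_le_right (by positivity)
  nlinarith [sum_tilted_neg_end_le hp hp1 hy (K + 1), sum_tilted_zero_end_le (y := y) hp hp1 K]

end Tilted

section Rotation

open Fin.NatCast

variable {N : ℕ} [NeZero N]

theorem pos_eq_sum_range (ξ : Fin N → Fin 3) {n : ℕ} (hn : n ≤ N) :
    pos ξ n = ∑ i ∈ range n, step (ξ i) := by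
  have hcast : ∀ i : Fin N, (if (i : ℕ) < n then step (ξ i) else 0)
      = (fun k : ℕ => if k < n then step (ξ k) else 0) i := fun i => by simp
  rw [pos, sum_congr rfl fun i _ => hcast i,
    Fin.sum_univ_eq_sum_range (fun k => if k < n then step (ξ k) else 0) N, ← sum_filter]
  congr 1
  ext k
  simp only [mem_filter, mem_range]
  omega

theorem pos_rotate (ξ : Fin N → Fin 3) (r : ℕ) {n : ℕ} (hn : n ≤ N) :
    pos (fun i : Fin N => ξ (i + (r : Fin N))) n
      = ∑ i ∈ range (r + n), step (ξ i) - ∑ i ∈ range r, step (ξ i) := by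
  rw [pos_eq_sum_range _ hn, sum_range_add, add_sub_cancel_left]
  simp [add_comm]

theorem tilted_rotate (p y : ℝ) (ξ : Fin N → Fin 3) (c : Fin N) :
    tilted p y (fun i : Fin N => ξ (i + c)) = tilted p y ξ := by
  simp only [tilted_eq_prod]
  exact Equiv.prod_comp (Equiv.addRight c) fun i => wt p (ξ i) * Real.exp (y * step (ξ i))

theorem exists_rotate_forall_pos (ξ : Fin N → Fin 3) (hξ : 0 < pos ξ N) :
    ∃ c : Fin N, ∀ n ∈ Icc 1 N, 0 < pos (fun i : Fin N => ξ (i + c)) n := by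
  have hper : ∀ i : ℕ, step (ξ ↑(i + N)) = step (ξ i) := fun i => by simp
  rw [pos_eq_sum_range ξ le_rfl] at hξ
  obtain ⟨r, -, hr⟩ := exists_forall_partialSum_lt _ hper hξ
  exact ⟨r, fun n hn => by rw [pos_rotate ξ r (mem_Icc.1 hn).2]; linarith [hr n hn]⟩

theorem sum_pos_end_le_mul_sum_pos_path (F : (Fin N → Fin 3) → ℝ) (hF : ∀ ξ, 0 ≤ F ξ)
    (hrot : ∀ ξ c, F (fun i : Fin N => ξ (i + c)) = F ξ) :
    ∑ ξ with 0 < pos ξ N, F ξ ≤ N * ∑ ξ with ∀ n ∈ Icc 1 N, 0 < pos ξ n, F ξ := by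
  calc ∑ ξ with 0 < pos ξ N, F ξ
      ≤ ∑ ξ : Fin N → Fin 3, ∑ c : Fin N,
          if ∀ n ∈ Icc 1 N, 0 < pos (fun i : Fin N => ξ (i + c)) n then F ξ else 0 := by
        rw [sum_filter]
        refine sum_le_sum fun ξ _ => ?_
        split_ifs with hξ
        · obtain ⟨c, hc⟩ := exists_rotate_forall_pos ξ hξ
          refine le_trans ?_ (single_le_sum (fun c _ => ?_) (mem_univ c))
          · rw [if_pos hc]
          · split_ifs <;> simp [hF]
        · exact sum_nonneg fun c _ => by split_ifs <;> simp [hF]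
    _ = ∑ c : Fin N, ∑ ξ : Fin N → Fin 3,
          if ∀ n ∈ Icc 1 N, 0 < pos (fun i : Fin N => ξ (i + c)) n
          then F (fun i : Fin N => ξ (i + c)) else 0 := by
        rw [sum_comm]
        simp [hrot]
    _ = ∑ c : Fin N, ∑ η with ∀ n ∈ Icc 1 N, 0 < pos η n, F η := sum_congr rfl fun c _ => by
        rw [sum_filter]
        exact Fintype.sum_bijective _ (Equiv.addRight c).bijective.comp_right _ _ fun _ => rfl
    _ = N * ∑ η with ∀ n ∈ Icc 1 N, 0 < pos η n, F η := by simp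

end Rotation

theorem Zfree_le_pow {p : ℝ} (hp : 0 ≤ p) (hp1 : p ≤ 1) (y : ℝ) (N : ℕ) :
    Zfree p y N ≤ (p * Real.cosh y + (1 - p)) ^ N := by
  rw [Zfree_eq_sum_ite, ← sum_tilted]
  exact sum_le_sum fun ξ _ => by split_ifs <;> simp [tilted_nonneg hp hp1]

theorem sum_tilted_pos_path_le_Zfree {p : ℝ} (hp : 0 ≤ p) (hp1 : p ≤ 1) (y : ℝ) (N : ℕ) :
    ∑ ξ : Fin N → Fin 3 with ∀ n ∈ Icc 1 N, 0 < pos ξ n, tilted p y ξ ≤ Zfree p y N := by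
  rw [Zfree_eq_sum_ite, sum_filter]
  refine sum_le_sum fun ξ _ => ?_
  split_ifs with hpos hne
  · exact le_rfl
  · exact absurd (fun n hn => (hpos n hn).ne') hne
  · exact tilted_nonneg hp hp1 y ξ
  · exact le_rfl

theorem le_Zfree {p y : ℝ} (hp : 0 ≤ p) (hp1 : p ≤ 1) (hy : 0 ≤ y) (K : ℕ) :
    (1 - max (1 - p) (p / 2)) / 2 * (p * Real.cosh y + (1 - p)) ^ (K + 1) / (K + 1 : ℕ)
      ≤ Zfree p y (K + 1) := by
  rw [div_le_iff₀ (by positivity), mul_comm (Zfree p y _)]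
  calc (1 - max (1 - p) (p / 2)) / 2 * (p * Real.cosh y + (1 - p)) ^ (K + 1)
      ≤ ∑ ξ : Fin (K + 1) → Fin 3 with 0 < pos ξ (K + 1), tilted p y ξ :=
        le_sum_tilted_pos_end hp hp1 hy K
    _ ≤ (K + 1 : ℕ) * ∑ ξ : Fin (K + 1) → Fin 3 with ∀ n ∈ Icc 1 (K + 1), 0 < pos ξ n,
          tilted p y ξ :=
        sum_pos_end_le_mul_sum_pos_path _ (tilted_nonneg hp hp1 y) (tilted_rotate p y)
    _ ≤ (K + 1 : ℕ) * Zfree p y (K + 1) := by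
        gcongr
        exact sum_tilted_pos_path_le_Zfree hp hp1 y (K + 1)

/-- `(1/N) log E[exp(y S_N); S_n ≠ 0, n = 1,…,N] → log(p cosh y + q)`. -/
theorem stmt_3 (p : ℝ) (hp : 0 < p) (hp1 : p ≤ 1) (y : ℝ) :
    Tendsto (fun N : ℕ => Real.log (Zfree p y N) / N) atTop
      (nhds (Real.log (p * Real.cosh y + (1 - p)))) := by
  wlog hy : 0 ≤ y generalizing y
  · simpa [Zfree_neg, Real.cosh_neg] using this (-y) (by linarith)
  have hc : 0 < (1 - max (1 - p) (p / 2)) / 2 := by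
    have : max (1 - p) (p / 2) < 1 := max_lt (by linarith) (by linarith)
    linarith
  refine tendsto_log_div_of_le_of_le (by linarith [one_le_mul_cosh_add_one_sub hp.le y]) hc ?_
    (Zfree_le_pow hp.le hp1 y)
  filter_upwards [eventually_ge_atTop 1] with N hN
  obtain ⟨K, rfl⟩ := Nat.exists_eq_add_of_le' hN
  exact le_Zfree hp.le hp1 hy K
end
end

section
/- Consider the homogeneous pinning model (\omega_n \equiv 1) for the simple random walk, i.e. the (p,q)-walk with p = 1, q = 0. Then \lim_{\beta\searrow 0} f_c(\beta) = 1 and \lim_{\beta \to \infty} \beta\,( f_c(\beta) - 1/2 ) = (\log 2)/2; equivalently, f_c(\beta) = 1/2 + (\log 2)/(2\beta) + o(1/\beta) as \beta \to \infty. -/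
open Filter Finset

noncomputable section
open scoped Classical

/-!
The free energy is computed with a transfer operator. Let `s = √(2e^β - 1)` and
`λ = (s + s⁻¹)/2 = cosh (log s)`. The function `h(0) = e^{-β}`, `h(x) = s^{-|x|}` (`x ≠ 0`) is a
positive eigenfunction with eigenvalue `λ` of the transfer operator `P` of the pinned walk, so
`E[e^{β·contacts} h(S_N)] = λ^N e^{-β}`. As `h ≤ 1`, this bounds `Z_N` from below by `e^{-β} λ^N`;
as `P1 ≤ 1 + (e^β - 1) s h`, it gives `Z_{N+1} ≤ Z_N + C λ^N` with `C = (e^β - 1) s e^{-β}`,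
hence `Z_N ≤ (1 + CN) λ^N`. So `F(β) = log λ = g(log s)`, i.e. `β f_c(β) = log (2e^β - 1)/2`: its slope
at `0` is `1`, and `log (2e^β - 1)/2 - β/2 = log (2 - e^{-β})/2 → log 2 / 2`.
-/

open Real Topology

theorem sum_pi_fin_succ {α M : Type*} [Fintype α] [AddCommMonoid M] (N : ℕ)
    (f : (Fin (N + 1) → α) → M) :
    ∑ ξ, f ξ = ∑ ξ : Fin N → α, ∑ t, f (Fin.snoc ξ t) := by
  rw [← (Fin.snocEquiv fun _ => α).sum_comp f, Fintype.sum_prod_type, Finset.sum_comm]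
  rfl

theorem tendsto_log_one_add_mul_div_natCast {C : ℝ} (hC : 0 ≤ C) :
    Tendsto (fun N : ℕ => log (1 + C * N) / N) atTop (𝓝 0) := by
  have hlog : Tendsto (fun N : ℕ => log N / N) atTop (𝓝 0) := by
    simpa [Function.comp_def] using
      (tendsto_pow_log_div_mul_add_atTop 1 0 1 one_ne_zero).comp tendsto_natCast_atTop_atTop
  have hup : Tendsto (fun N : ℕ => log (1 + C) / N + log N / N) atTop (𝓝 0) := by
    simpa using (tendsto_const_div_atTop_nhds_zero_nat _).add hlog
  refine tendsto_of_tendsto_of_tendsto_of_le_of_le' tendsto_const_nhds hup ?_ ?_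
  · filter_upwards with N
    exact div_nonneg (log_nonneg (le_add_of_nonneg_right (by positivity))) N.cast_nonneg
  · filter_upwards [eventually_ge_atTop 1] with N hN
    have hN' : (1 : ℝ) ≤ N := by exact_mod_cast hN
    rw [← add_div, ← log_mul (by positivity) (by positivity)]
    gcongr
    nlinarith

theorem tendsto_log_div_natCast_of_le_of_le {u : ℕ → ℝ} {a C r : ℝ} (ha : 0 < a) (hC : 0 ≤ C)
    (hr : 0 < r) (hlow : ∀ N, a * r ^ N ≤ u N) (hup : ∀ N, u N ≤ (1 + C * N) * r ^ N) :
    Tendsto (fun N : ℕ => log (u N) / N) atTop (𝓝 (log r)) := by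
  have hlow' : Tendsto (fun N : ℕ => log a / N + log r) atTop (𝓝 (log r)) := by
    simpa using (tendsto_const_div_atTop_nhds_zero_nat (log a)).add_const (log r)
  have hup' : Tendsto (fun N : ℕ => log (1 + C * N) / N + log r) atTop (𝓝 (log r)) := by
    simpa using (tendsto_log_one_add_mul_div_natCast hC).add_const (log r)
  refine tendsto_of_tendsto_of_tendsto_of_le_of_le' hlow' hup' ?_ ?_ <;>
    filter_upwards [eventually_gt_atTop 0] with N hN
  · have hN' : (N : ℝ) ≠ 0 := by positivity
    calc log a / N + log r = log (a * r ^ N) / N := by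
          rw [log_mul ha.ne' (by positivity), log_pow]; field_simp
      _ ≤ log (u N) / N := by gcongr; exact hlow N
  · have hN' : (N : ℝ) ≠ 0 := by positivity
    have hu : 0 < u N := (by positivity : 0 < a * r ^ N).trans_le (hlow N)
    calc log (u N) / N ≤ log ((1 + C * N) * r ^ N) / N := by gcongr; exact hup N
      _ = log (1 + C * N) / N + log r := by
          rw [log_mul (by positivity) (by positivity), log_pow]; field_simp

theorem le_one_add_mul_mul_pow_of_le_add {u : ℕ → ℝ} {C r : ℝ} (hC : 0 ≤ C) (hr : 1 ≤ r)
    (h0 : u 0 ≤ 1) (hsucc : ∀ N, u (N + 1) ≤ u N + C * r ^ N) (N : ℕ) :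
    u N ≤ (1 + C * N) * r ^ N := by
  induction N with
  | zero => simpa using h0
  | succ N ih =>
    calc u (N + 1) ≤ (1 + C * N) * r ^ N + C * r ^ N := by linarith [hsucc N]
      _ = (1 + C * (N + 1 : ℕ)) * r ^ N := by push_cast; ring
      _ ≤ (1 + C * (N + 1 : ℕ)) * r ^ (N + 1) :=
          mul_le_mul_of_nonneg_left (pow_le_pow_right₀ hr N.le_succ) (by positivity)

theorem tendsto_log_two_mul_exp_sub_one_div_nhdsGT :
    Tendsto (fun β => log (2 * exp β - 1) / 2 / β) (𝓝[>] 0) (𝓝 1) := by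
  have hderiv : HasDerivAt (fun β => log (2 * exp β - 1) / 2) 1 0 :=
    ((((hasDerivAt_exp 0).const_mul 2).sub_const 1).log (by norm_num)).div_const 2
      |>.congr_deriv (by norm_num)
  refine hderiv.tendsto_slope_zero_right.congr fun β => ?_
  norm_num [div_eq_inv_mul, mul_comm]

theorem tendsto_mul_log_two_mul_exp_sub_one_div_sub_atTop :
    Tendsto (fun β => β * (log (2 * exp β - 1) / 2 / β - 1 / 2)) atTop (𝓝 (log 2 / 2)) := by
  have hlim : Tendsto (fun β => log (2 - exp (-β)) / 2) atTop (𝓝 (log 2 / 2)) := by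
    have := (tendsto_exp_neg_atTop_nhds_zero.const_sub 2).log (by norm_num)
    simpa using this.div_const 2
  refine hlim.congr' ?_
  filter_upwards [eventually_gt_atTop 0] with β hβ
  have hpos : 0 < 2 * exp β - 1 := by linarith [one_le_exp hβ.le]
  rw [show 2 - exp (-β) = (2 * exp β - 1) * exp (-β) by rw [exp_neg]; field_simp,
    log_mul hpos.ne' (exp_pos _).ne', log_exp]
  field_simp
  ring

namespace Pinning

variable {N : ℕ}

theorem pos_zero (ξ : Fin N → Fin 3) : pos ξ 0 = 0 := by
  simp [pos]

theorem pos_snoc_of_le (ξ : Fin N → Fin 3) (t : Fin 3) {n : ℕ} (hn : n ≤ N) :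
    pos (Fin.snoc ξ t : Fin (N + 1) → Fin 3) n = pos ξ n := by
  simp [pos, Fin.sum_univ_castSucc, hn.not_gt]

theorem pos_snoc_succ (ξ : Fin N → Fin 3) (t : Fin 3) :
    pos (Fin.snoc ξ t : Fin (N + 1) → Fin 3) (N + 1) = pos ξ N + step t := by
  simp [pos, Fin.sum_univ_castSucc]

theorem pwt_snoc (p : ℝ) (ξ : Fin N → Fin 3) (t : Fin 3) :
    pwt p (Fin.snoc ξ t : Fin (N + 1) → Fin 3) = pwt p ξ * wt p t := by
  simp [pwt, Fin.prod_univ_castSucc]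

theorem wt_nonneg {p : ℝ} (hp₀ : 0 ≤ p) (hp₁ : p ≤ 1) (t : Fin 3) : 0 ≤ wt p t := by
  fin_cases t <;> simp [wt] <;> linarith

theorem pwt_nonneg {p : ℝ} (hp₀ : 0 ≤ p) (hp₁ : p ≤ 1) (ξ : Fin N → Fin 3) : 0 ≤ pwt p ξ :=
  prod_nonneg fun i _ => wt_nonneg hp₀ hp₁ (ξ i)

def contacts (ξ : Fin N → Fin 3) : ℝ :=
  ∑ n ∈ Icc 1 N, if pos ξ n = 0 then 1 else 0

theorem contacts_snoc (ξ : Fin N → Fin 3) (t : Fin 3) :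
    contacts (Fin.snoc ξ t : Fin (N + 1) → Fin 3)
      = contacts ξ + if pos ξ N + step t = 0 then 1 else 0 := by
  rw [contacts, sum_Icc_succ_top (by omega), pos_snoc_succ]
  congr 1
  exact sum_congr rfl fun n hn => by rw [pos_snoc_of_le ξ t (mem_Icc.1 hn).2]

def pinnedSum (p β : ℝ) (N : ℕ) (φ : ℤ → ℝ) : ℝ :=
  ∑ ξ : Fin N → Fin 3, pwt p ξ * exp (β * contacts ξ) * φ (pos ξ N)

def transfer (p β : ℝ) (φ : ℤ → ℝ) (x : ℤ) : ℝ :=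
  ∑ t, wt p t * (if x + step t = 0 then exp β else 1) * φ (x + step t)

variable {p β : ℝ}

theorem Z_eq_pinnedSum (N : ℕ) : Z p (fun _ => 1) β 0 N = pinnedSum p β N 1 := by
  simp [Z, pinnedSum, contacts]

theorem pinnedSum_zero (φ : ℤ → ℝ) : pinnedSum p β 0 φ = φ 0 := by
  simp [pinnedSum, contacts, pwt, pos_zero]

theorem pinnedSum_succ (N : ℕ) (φ : ℤ → ℝ) :
    pinnedSum p β (N + 1) φ = pinnedSum p β N (transfer p β φ) := by
  rw [pinnedSum, sum_pi_fin_succ]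
  refine sum_congr rfl fun ξ _ => ?_
  simp only [pwt_snoc, contacts_snoc, pos_snoc_succ, transfer, mul_sum]
  refine sum_congr rfl fun t _ => ?_
  split_ifs <;> simp only [mul_add, mul_one, add_zero, exp_add] <;> ring

theorem pinnedSum_add (N : ℕ) (φ ψ : ℤ → ℝ) :
    pinnedSum p β N (φ + ψ) = pinnedSum p β N φ + pinnedSum p β N ψ := by
  simp only [pinnedSum, Pi.add_apply, mul_add, sum_add_distrib]

theorem pinnedSum_smul (N : ℕ) (c : ℝ) (φ : ℤ → ℝ) :
    pinnedSum p β N (c • φ) = c * pinnedSum p β N φ := by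
  simp only [pinnedSum, Pi.smul_apply, smul_eq_mul, mul_sum]
  exact sum_congr rfl fun _ _ => by ring

theorem pinnedSum_mono (hp₀ : 0 ≤ p) (hp₁ : p ≤ 1) (N : ℕ) {φ ψ : ℤ → ℝ} (h : φ ≤ ψ) :
    pinnedSum p β N φ ≤ pinnedSum p β N ψ :=
  sum_le_sum fun ξ _ =>
    mul_le_mul_of_nonneg_left (h _) (mul_nonneg (pwt_nonneg hp₀ hp₁ ξ) (exp_pos _).le)

theorem transfer_one_apply (φ : ℤ → ℝ) (x : ℤ) :
    transfer 1 β φ x = ((if x - 1 = 0 then exp β else 1) * φ (x - 1)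
      + (if x + 1 = 0 then exp β else 1) * φ (x + 1)) / 2 := by
  have hw : wt 1 = ![1 / 2, 0, 1 / 2] := by norm_num [wt]
  rw [transfer, Fin.sum_univ_three, hw, show step 0 = -1 from rfl, show step 1 = 0 from rfl,
    show step 2 = 1 from rfl, ← sub_eq_add_neg, add_zero]
  simp only [Matrix.cons_val]
  ring

def decayBase (β : ℝ) : ℝ := √(2 * exp β - 1)

def perronRoot (β : ℝ) : ℝ := cosh (log (decayBase β))

def perronFun (β : ℝ) (x : ℤ) : ℝ :=
  if x = 0 then (exp β)⁻¹ else (decayBase β)⁻¹ ^ x.natAbs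

theorem decayBase_sq (hβ : 0 ≤ β) : decayBase β ^ 2 = 2 * exp β - 1 :=
  sq_sqrt (by linarith [one_le_exp hβ])

theorem one_le_decayBase (hβ : 0 ≤ β) : 1 ≤ decayBase β :=
  one_le_sqrt.2 (by linarith [one_le_exp hβ])

theorem perronRoot_eq (hβ : 0 ≤ β) : perronRoot β = (decayBase β + (decayBase β)⁻¹) / 2 :=
  cosh_log (by linarith [one_le_decayBase hβ])

theorem perronRoot_mul_inv_exp (hβ : 0 ≤ β) : perronRoot β * (exp β)⁻¹ = (decayBase β)⁻¹ := by
  have hs : decayBase β ≠ 0 := by linarith [one_le_decayBase hβ]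
  rw [perronRoot_eq hβ]
  field_simp
  linear_combination decayBase_sq hβ

theorem perronFun_nonneg (hβ : 0 ≤ β) (x : ℤ) : 0 ≤ perronFun β x := by
  unfold perronFun
  split_ifs
  · positivity
  · exact pow_nonneg (inv_nonneg.2 (by linarith [one_le_decayBase hβ])) _

theorem perronFun_le_one (hβ : 0 ≤ β) : perronFun β ≤ 1 := fun x => by
  unfold perronFun
  split_ifs
  · exact inv_le_one_of_one_le₀ (one_le_exp hβ)
  · exact pow_le_one₀ (inv_nonneg.2 (by linarith [one_le_decayBase hβ]))
      (inv_le_one_of_one_le₀ (one_le_decayBase hβ))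

theorem transfer_perronFun (hβ : 0 ≤ β) :
    transfer 1 β (perronFun β) = perronRoot β • perronFun β := by
  funext x
  have hsr : decayBase β * (decayBase β)⁻¹ = 1 :=
    mul_inv_cancel₀ (by linarith [one_le_decayBase hβ])
  have hgeom (k : ℕ) : ((decayBase β)⁻¹ ^ k + (decayBase β)⁻¹ ^ (k + 2)) / 2
      = perronRoot β * (decayBase β)⁻¹ ^ (k + 1) := by
    rw [perronRoot_eq hβ]
    linear_combination (-(decayBase β)⁻¹ ^ k / 2) * hsr
  have hedge : (1 + (decayBase β)⁻¹ ^ 2) / 2 = perronRoot β * (decayBase β)⁻¹ := by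
    rw [perronRoot_eq hβ]
    linear_combination (-1 / 2 : ℝ) * hsr
  rw [transfer_one_apply, Pi.smul_apply, smul_eq_mul]
  rcases lt_trichotomy x 0 with hx | rfl | hx
  · rcases eq_or_ne x (-1) with rfl | hx'
    · simpa [perronFun, add_comm] using hedge
    · have := hgeom (x + 1).natAbs
      rw [add_comm, show (x + 1).natAbs + 2 = (x - 1).natAbs by omega,
        show (x + 1).natAbs + 1 = x.natAbs by omega] at this
      simpa [perronFun, hx.ne, show x - 1 ≠ 0 by omega, show x + 1 ≠ 0 by omega] using this
  · simp [perronFun, ← perronRoot_mul_inv_exp hβ]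
  · rcases eq_or_ne x 1 with rfl | hx'
    · simpa [perronFun] using hedge
    · have := hgeom (x - 1).natAbs
      rw [show (x - 1).natAbs + 2 = (x + 1).natAbs by omega,
        show (x - 1).natAbs + 1 = x.natAbs by omega] at this
      simpa [perronFun, hx.ne', show x - 1 ≠ 0 by omega, show x + 1 ≠ 0 by omega] using this

theorem transfer_one_le (hβ : 0 ≤ β) :
    transfer 1 β 1 ≤ 1 + ((exp β - 1) * decayBase β) • perronFun β := fun x => by
  have hE := one_le_exp hβ
  have hs := one_le_decayBase hβ
  rw [transfer_one_apply, Pi.add_apply, Pi.smul_apply, smul_eq_mul]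
  by_cases hx : x = 1 ∨ x = -1
  · have hsr : decayBase β * (decayBase β)⁻¹ = 1 := mul_inv_cancel₀ (by linarith)
    rcases hx with rfl | rfl <;> simp [perronFun, mul_assoc, hsr] <;> linarith
  · have := mul_nonneg (mul_nonneg (sub_nonneg.2 hE) (by linarith : 0 ≤ decayBase β))
      (perronFun_nonneg hβ x)
    simp [show x - 1 ≠ 0 by omega, show x + 1 ≠ 0 by omega]
    linarith

theorem pinnedSum_perronFun (hβ : 0 ≤ β) (N : ℕ) :
    pinnedSum 1 β N (perronFun β) = (exp β)⁻¹ * perronRoot β ^ N := by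
  induction N with
  | zero => simp [pinnedSum_zero, perronFun]
  | succ N ih => rw [pinnedSum_succ, transfer_perronFun hβ, pinnedSum_smul, ih, pow_succ]; ring

theorem perronRoot_pow_mul_le_Z (hβ : 0 ≤ β) (N : ℕ) :
    (exp β)⁻¹ * perronRoot β ^ N ≤ Z 1 (fun _ => 1) β 0 N := by
  rw [Z_eq_pinnedSum, ← pinnedSum_perronFun hβ]
  exact pinnedSum_mono zero_le_one le_rfl N (perronFun_le_one hβ)

theorem Z_succ_le (hβ : 0 ≤ β) (N : ℕ) :
    Z 1 (fun _ => 1) β 0 (N + 1) ≤ Z 1 (fun _ => 1) β 0 N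
      + (exp β - 1) * decayBase β * (exp β)⁻¹ * perronRoot β ^ N := by
  rw [Z_eq_pinnedSum, Z_eq_pinnedSum, pinnedSum_succ]
  calc pinnedSum 1 β N (transfer 1 β 1)
      ≤ pinnedSum 1 β N (1 + ((exp β - 1) * decayBase β) • perronFun β) :=
        pinnedSum_mono zero_le_one le_rfl N (transfer_one_le hβ)
    _ = _ := by rw [pinnedSum_add, pinnedSum_smul, pinnedSum_perronFun hβ]; ring

theorem tendsto_log_Z_div (hβ : 0 ≤ β) :
    Tendsto (fun N : ℕ => log (Z 1 (fun _ => 1) β 0 N) / N) atTop (𝓝 (log (perronRoot β))) := by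
  have hC : 0 ≤ (exp β - 1) * decayBase β * (exp β)⁻¹ := by
    have := one_le_decayBase hβ
    have := one_le_exp hβ
    positivity
  refine tendsto_log_div_natCast_of_le_of_le (inv_pos.2 (exp_pos β)) hC (cosh_pos _)
    (perronRoot_pow_mul_le_Z hβ)
    (le_one_add_mul_mul_pow_of_le_add hC (one_le_cosh _) ?_ (Z_succ_le hβ))
  simp [Z_eq_pinnedSum, pinnedSum_zero]

theorem eq_g_log_decayBase_of_tendsto {F : ℝ} (hβ : 0 ≤ β)
    (hF : Tendsto (fun N : ℕ => log (Z 1 (fun _ => 1) β 0 N) / N) atTop (𝓝 F)) :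
    F = g 1 (log (decayBase β)) := by
  simpa [g, perronRoot] using tendsto_nhds_unique hF (tendsto_log_Z_div hβ)

theorem log_decayBase (hβ : 0 ≤ β) : log (decayBase β) = log (2 * exp β - 1) / 2 :=
  log_sqrt (by linarith [one_le_exp hβ])

end Pinning

theorem stmt_6_general
    (F : ℝ → ℝ)
    (hF : ∀ β : ℝ, 0 ≤ β →
      Tendsto (fun N : ℕ => Real.log (Z 1 (fun _ => 1) β 0 N) / N) atTop (nhds (F β)))
    (ginv : ℝ → ℝ)
    (hginv_left : ∀ y : ℝ, 0 ≤ y → ginv (g 1 y) = y) :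
    Tendsto (fun β : ℝ => ginv (F β) / β) (nhdsWithin 0 (Set.Ioi 0)) (nhds 1) ∧
    Tendsto (fun β : ℝ => β * (ginv (F β) / β - 1 / 2)) atTop
      (nhds (Real.log 2 / 2)) := by
  have hcrit (β : ℝ) (hβ : 0 ≤ β) : ginv (F β) = log (2 * exp β - 1) / 2 := by
    rw [Pinning.eq_g_log_decayBase_of_tendsto hβ (hF β hβ),
      hginv_left _ (log_nonneg (Pinning.one_le_decayBase hβ)), Pinning.log_decayBase hβ]
  refine ⟨tendsto_log_two_mul_exp_sub_one_div_nhdsGT.congr' ?_,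
    tendsto_mul_log_two_mul_exp_sub_one_div_sub_atTop.congr' ?_⟩
  · filter_upwards [self_mem_nhdsWithin] with β hβ
    rw [hcrit β (le_of_lt hβ)]
  · filter_upwards [eventually_ge_atTop 0] with β hβ
    rw [hcrit β hβ]

/-- for the homogeneous model on the simple random walk (`p = 1`),
`f_c(β) → 1` as `β ↘ 0` and `β (f_c(β) - 1/2) → (log 2)/2` as `β → ∞`. -/
theorem stmt_6
    (F : ℝ → ℝ)
    (hF : ∀ β : ℝ, 0 ≤ β →
      Tendsto (fun N : ℕ => Real.log (Z 1 (fun _ => 1) β 0 N) / N) atTop (nhds (F β)))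
    (ginv : ℝ → ℝ)
    (hginv_left : ∀ y : ℝ, 0 ≤ y → ginv (g 1 y) = y)
    (hginv_right : ∀ x : ℝ, 0 ≤ x → g 1 (ginv x) = x)
    (hginv_nonneg : ∀ x : ℝ, 0 ≤ x → 0 ≤ ginv x) :
    Tendsto (fun β : ℝ => ginv (F β) / β) (nhdsWithin 0 (Set.Ioi 0)) (nhds 1) ∧
    Tendsto (fun β : ℝ => β * (ginv (F β) / β - 1 / 2)) atTop
      (nhds (Real.log 2 / 2)) :=
  stmt_6_general F hF ginv hginv_left
end
end

section
/- Consider the homogeneous pinning model (\omega_n \equiv 1) for the (p,q)-walk with 2/3 < p < 1. Then the critical force exhibits re-entrance: the function \beta \mapsto f_c(\beta) is not monotone on (0,\infty); more precisely, there exist 0 < \beta_1 < \beta_2 < \beta_3 such that f_c(\beta_1) > f_c(\beta_2) and f_c(\beta_2) < f_c(\beta_3). -/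
open Filter Finset

noncomputable section
open scoped Classical

/-!
`Z_N = (K^N 1)(0)` for the transfer operator `(Kh)(x) = E[e^{β 1{x + ξ = 0}} h(x + ξ)]`, so a test
function `h` with `h(0) = 1`, `h ≤ 1` and `r h ≤ K h` gives `r^N ≤ Z_N`, hence `log r ≤ F(β)`;
dually, `h ≥ 1` and `K h ≤ r h` give `F(β) ≤ log r`.

The indicator of the origin gives `F(β) ≥ β + log q`, and `h = e^{β/2}` off the origin gives
`F(β) ≤ log(q e^β + p e^{β/2})`. As `x ≤ g⁻¹(x) ≤ x - log(p/2)`, this yields `f_c(β) → 1` as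
`β → ∞`, and, since `q < p/2` exactly when `p > 2/3`, `f_c(β) < 1` for large `β`.
For `e^β = 2 - p` the function `e^{-β(|x| - 1)}` (and `1` at the origin) is a sub-eigenfunction with
eigenvalue `p cosh β + q`, so `F(β) ≥ g(β)`, i.e. `f_c(β) ≥ 1`.
-/

open Real Topology

namespace PinningModel

variable {p β : ℝ}

lemma wt_nonneg (hp0 : 0 ≤ p) (hp1 : p ≤ 1) (j : Fin 3) : 0 ≤ wt p j := by
  fin_cases j <;> simp [wt] <;> linarith

lemma pwt_nonneg (hp0 : 0 ≤ p) (hp1 : p ≤ 1) {N : ℕ} (ξ : Fin N → Fin 3) : 0 ≤ pwt p ξ :=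
  prod_nonneg fun _ _ => wt_nonneg hp0 hp1 _

lemma pwt_snoc {N : ℕ} (ξ : Fin N → Fin 3) (j : Fin 3) :
    pwt p (Fin.snoc ξ j) = pwt p ξ * wt p j := by
  simp [pwt, Fin.prod_univ_castSucc]

lemma pos_snoc_of_le {N : ℕ} (ξ : Fin N → Fin 3) (j : Fin 3) {n : ℕ} (hn : n ≤ N) :
    pos (Fin.snoc ξ j) n = pos ξ n := by
  simp only [pos, Fin.sum_univ_castSucc, Fin.snoc_castSucc, Fin.val_castSucc, Fin.snoc_last,
    Fin.val_last]
  rw [if_neg (by omega), add_zero]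

lemma pos_snoc_succ {N : ℕ} (ξ : Fin N → Fin 3) (j : Fin 3) :
    pos (Fin.snoc ξ j) (N + 1) = pos ξ N + step j := by
  simp only [pos, Fin.sum_univ_castSucc, Fin.snoc_castSucc, Fin.snoc_last, Fin.is_lt, if_true]

def localTime {N : ℕ} (ξ : Fin N → Fin 3) : ℝ :=
  ∑ n ∈ Icc 1 N, if pos ξ n = 0 then 1 else 0

lemma localTime_snoc {N : ℕ} (ξ : Fin N → Fin 3) (j : Fin 3) :
    localTime (Fin.snoc ξ j) = localTime ξ + if pos ξ N + step j = 0 then 1 else 0 := by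
  rw [localTime, ← Ico_add_one_right_eq_Icc, sum_Ico_succ_top (by omega),
    Ico_add_one_right_eq_Icc, pos_snoc_succ]
  congr 1
  exact sum_congr rfl fun n hn => by rw [pos_snoc_of_le ξ j (mem_Icc.mp hn).2]

def pin (β : ℝ) (x : ℤ) : ℝ := exp (β * if x = 0 then 1 else 0)

@[simp] lemma pin_zero : pin β 0 = exp β := by simp [pin]

lemma pin_of_ne_zero {x : ℤ} (hx : x ≠ 0) : pin β x = 1 := by simp [pin, hx]

def transfer (p β : ℝ) (h : ℤ → ℝ) (x : ℤ) : ℝ :=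
  p / 2 * (pin β (x - 1) * h (x - 1)) + (1 - p) * (pin β x * h x) +
    p / 2 * (pin β (x + 1) * h (x + 1))

/-- `E[e^{β L_N} h(S_N)]`. -/
def pinnedSum (p β : ℝ) (N : ℕ) (h : ℤ → ℝ) : ℝ :=
  ∑ ξ : Fin N → Fin 3, pwt p ξ * exp (β * localTime ξ) * h (pos ξ N)

lemma pinnedSum_zero (h : ℤ → ℝ) : pinnedSum p β 0 h = h 0 := by
  simp [pinnedSum, pwt, localTime, pos]

lemma pinnedSum_succ (N : ℕ) (h : ℤ → ℝ) :
    pinnedSum p β (N + 1) h = pinnedSum p β N (transfer p β h) := by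
  rw [pinnedSum, ← (Fin.snocEquiv fun _ => Fin 3).sum_comp, Fintype.sum_prod_type_right]
  refine sum_congr rfl fun ξ _ => ?_
  simp only [Fin.snocEquiv, Equiv.coe_fn_mk, pwt_snoc, localTime_snoc, pos_snoc_succ, mul_add,
    exp_add, Fin.sum_univ_three, transfer, pin, wt, step]
  simp only [Matrix.cons_val_zero, Matrix.cons_val_one, Matrix.cons_val_two, Matrix.head_cons,
    Matrix.tail_cons, ← sub_eq_add_neg, add_zero]
  ring

lemma pinnedSum_mono (hp0 : 0 ≤ p) (hp1 : p ≤ 1) (N : ℕ) {h h' : ℤ → ℝ}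
    (hh : ∀ x, h x ≤ h' x) : pinnedSum p β N h ≤ pinnedSum p β N h' :=
  sum_le_sum fun ξ _ =>
    mul_le_mul_of_nonneg_left (hh _) (mul_nonneg (pwt_nonneg hp0 hp1 ξ) (exp_nonneg _))

lemma pinnedSum_const_mul (N : ℕ) (c : ℝ) (h : ℤ → ℝ) :
    pinnedSum p β N (fun x => c * h x) = c * pinnedSum p β N h := by
  simp only [pinnedSum, mul_sum]
  exact sum_congr rfl fun _ _ => by ring

lemma Z_eq_pinnedSum (N : ℕ) : Z p (fun _ => 1) β 0 N = pinnedSum p β N fun _ => 1 := by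
  simp [Z, pinnedSum, localTime]

lemma transfer_nonneg (hp0 : 0 ≤ p) (hp1 : p ≤ 1) {h : ℤ → ℝ} (hh : ∀ x, 0 ≤ h x) (x : ℤ) :
    0 ≤ transfer p β h x := by
  have hterm : ∀ y, 0 ≤ pin β y * h y := fun y => mul_nonneg (exp_nonneg _) (hh y)
  have hp2 : 0 ≤ p / 2 := by linarith
  have hq : 0 ≤ 1 - p := by linarith
  exact add_nonneg (add_nonneg (mul_nonneg hp2 (hterm _)) (mul_nonneg hq (hterm _)))
    (mul_nonneg hp2 (hterm _))

lemma pow_mul_le_pinnedSum (hp0 : 0 ≤ p) (hp1 : p ≤ 1) {r : ℝ} (hr : 0 ≤ r) {h : ℤ → ℝ}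
    (hh : ∀ x, r * h x ≤ transfer p β h x) (N : ℕ) : r ^ N * h 0 ≤ pinnedSum p β N h := by
  induction N with
  | zero => simp [pinnedSum_zero]
  | succ N ih =>
    calc r ^ (N + 1) * h 0 = r * (r ^ N * h 0) := by ring
      _ ≤ r * pinnedSum p β N h := mul_le_mul_of_nonneg_left ih hr
      _ = pinnedSum p β N fun x => r * h x := (pinnedSum_const_mul N r h).symm
      _ ≤ pinnedSum p β N (transfer p β h) := pinnedSum_mono hp0 hp1 N hh
      _ = pinnedSum p β (N + 1) h := (pinnedSum_succ N h).symm

lemma pinnedSum_le_pow_mul (hp0 : 0 ≤ p) (hp1 : p ≤ 1) {r : ℝ} (hr : 0 ≤ r) {h : ℤ → ℝ}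
    (hh : ∀ x, transfer p β h x ≤ r * h x) (N : ℕ) : pinnedSum p β N h ≤ r ^ N * h 0 := by
  induction N with
  | zero => simp [pinnedSum_zero]
  | succ N ih =>
    calc pinnedSum p β (N + 1) h = pinnedSum p β N (transfer p β h) := pinnedSum_succ N h
      _ ≤ pinnedSum p β N fun x => r * h x := pinnedSum_mono hp0 hp1 N hh
      _ = r * pinnedSum p β N h := pinnedSum_const_mul N r h
      _ ≤ r * (r ^ N * h 0) := mul_le_mul_of_nonneg_left ih hr
      _ = r ^ (N + 1) * h 0 := by ring

lemma pow_le_Z (hp0 : 0 ≤ p) (hp1 : p ≤ 1) {r : ℝ} (hr : 0 ≤ r) {h : ℤ → ℝ} (h0 : h 0 = 1)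
    (hle : ∀ x, h x ≤ 1) (hh : ∀ x, r * h x ≤ transfer p β h x) (N : ℕ) :
    r ^ N ≤ Z p (fun _ => 1) β 0 N :=
  calc r ^ N = r ^ N * h 0 := by rw [h0, mul_one]
    _ ≤ pinnedSum p β N h := pow_mul_le_pinnedSum hp0 hp1 hr hh N
    _ ≤ pinnedSum p β N fun _ => 1 := pinnedSum_mono hp0 hp1 N hle
    _ = Z p (fun _ => 1) β 0 N := (Z_eq_pinnedSum N).symm

lemma Z_le_pow (hp0 : 0 ≤ p) (hp1 : p ≤ 1) {r : ℝ} (hr : 0 ≤ r) {h : ℤ → ℝ} (h0 : h 0 = 1)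
    (hge : ∀ x, 1 ≤ h x) (hh : ∀ x, transfer p β h x ≤ r * h x) (N : ℕ) :
    Z p (fun _ => 1) β 0 N ≤ r ^ N :=
  calc Z p (fun _ => 1) β 0 N = pinnedSum p β N fun _ => 1 := Z_eq_pinnedSum N
    _ ≤ pinnedSum p β N h := pinnedSum_mono hp0 hp1 N hge
    _ ≤ r ^ N * h 0 := pinnedSum_le_pow_mul hp0 hp1 hr hh N
    _ = r ^ N := by rw [h0, mul_one]

lemma one_le_Z (hp0 : 0 ≤ p) (hp1 : p ≤ 1) (hβ : 0 ≤ β) (N : ℕ) : 1 ≤ Z p (fun _ => 1) β 0 N := by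
  have hpin : ∀ y, 1 ≤ pin β y := fun y => one_le_exp (mul_nonneg hβ (by split_ifs <;> norm_num))
  simpa using pow_le_Z hp0 hp1 zero_le_one (h := fun _ => 1) rfl (fun _ => le_rfl) (fun x => by
    simp only [transfer, mul_one]
    nlinarith [hpin (x - 1), hpin x, hpin (x + 1)]) N

lemma one_sub_mul_exp_pow_le_Z (hp0 : 0 ≤ p) (hp1 : p ≤ 1) (N : ℕ) :
    ((1 - p) * exp β) ^ N ≤ Z p (fun _ => 1) β 0 N := by
  have hq : 0 ≤ 1 - p := by linarith
  refine pow_le_Z hp0 hp1 (mul_nonneg hq (exp_nonneg β)) (h := fun x => if x = 0 then 1 else 0)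
    (by simp) (fun x => by split_ifs <;> norm_num) (fun x => ?_) N
  rcases eq_or_ne x 0 with rfl | hx
  · simp [transfer]
  · simpa [hx] using transfer_nonneg hp0 hp1 (fun y => by split_ifs <;> norm_num) x

lemma Z_le_one_sub_mul_exp_add_pow (hp0 : 0 ≤ p) (hp1 : p ≤ 1) (hβ : 0 ≤ β) (N : ℕ) :
    Z p (fun _ => 1) β 0 N ≤ ((1 - p) * exp β + p * exp (β / 2)) ^ N := by
  have hq : 0 ≤ 1 - p := by linarith
  set a := exp (β / 2)
  have ha : 1 ≤ a := one_le_exp (by linarith)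
  have hexp : exp β = a * a := by rw [← exp_add, add_halves]
  set u : ℤ → ℝ := fun x => if x = 0 then 1 else a
  have hpin : ∀ y, pin β y * u y ≤ a * a := fun y => by
    rcases eq_or_ne y 0 with rfl | hy
    · simp [u, hexp]
    · simp only [u, pin_of_ne_zero hy, if_neg hy, one_mul]; nlinarith
  refine Z_le_pow hp0 hp1 (by positivity) (h := u) (by simp [u]) (fun x => ?_) (fun x => ?_) N
  · simp only [u]; split_ifs <;> linarith
  rcases eq_or_ne x 0 with rfl | hx
  · refine le_of_eq ?_
    simp [transfer, u, pin_of_ne_zero]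
    ring
  · have hp2 : 0 ≤ p / 2 := by linarith
    calc transfer p β u x
        ≤ p / 2 * (a * a) + (1 - p) * a + p / 2 * (a * a) := by
          have hmid : pin β x * u x = a := by simp only [u, pin_of_ne_zero hx, if_neg hx, one_mul]
          rw [transfer, hmid]
          exact add_le_add (add_le_add_left (mul_le_mul_of_nonneg_left (hpin _) hp2) _)
            (mul_le_mul_of_nonneg_left (hpin _) hp2)
      _ ≤ ((1 - p) * exp β + p * a) * u x := by
          simp only [u, if_neg hx, hexp]
          nlinarith [mul_nonneg hq (mul_nonneg (sub_nonneg.2 ha) (by linarith : 0 ≤ a + 1))]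

lemma exp_abs_sub_one_add_exp_abs_add_one {x : ℤ} (hx : x ≠ 0) (c : ℝ) :
    exp (c * (1 - |(x : ℝ) - 1|)) + exp (c * (1 - |(x : ℝ) + 1|)) =
      2 * cosh c * exp (c * (1 - |(x : ℝ)|)) := by
  have hshift : ∀ t : ℝ, exp (c * (1 - (t - 1))) + exp (c * (1 - (t + 1))) =
      2 * cosh c * exp (c * (1 - t)) := fun t => by
    rw [cosh_eq, show c * (1 - (t - 1)) = c * (1 - t) + c by ring,
      show c * (1 - (t + 1)) = c * (1 - t) + -c by ring, exp_add, exp_add]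
    ring
  rcases hx.lt_or_gt with hx | hx
  · have hx' : (x : ℝ) ≤ -1 := by exact_mod_cast Int.le_sub_one_of_lt hx
    rw [abs_of_nonpos (by linarith : (x : ℝ) - 1 ≤ 0), abs_of_nonpos (by linarith : (x : ℝ) + 1 ≤ 0),
      abs_of_nonpos (by linarith : (x : ℝ) ≤ 0), add_comm, ← hshift]
    ring_nf
  · have hx' : (1 : ℝ) ≤ x := by exact_mod_cast hx
    rw [abs_of_nonneg (by linarith : (0 : ℝ) ≤ x - 1), abs_of_nonneg (by linarith : (0 : ℝ) ≤ x + 1),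
      abs_of_nonneg (by linarith : (0 : ℝ) ≤ x), hshift]

lemma mul_cosh_add_one_sub_pow_le_Z (hp0 : 0 ≤ p) (hp1 : p ≤ 1) (hβ : 0 ≤ β)
    (hcond : p * (cosh β - 1) ≤ (1 - p) * (exp β - 1)) (N : ℕ) :
    (p * cosh β + (1 - p)) ^ N ≤ Z p (fun _ => 1) β 0 N := by
  set v : ℤ → ℝ := fun x => if x = 0 then 1 else exp (β * (1 - |(x : ℝ)|))
  have hpin : ∀ y, pin β y * v y = exp (β * (1 - |((y : ℤ) : ℝ)|)) := fun y => by
    rcases eq_or_ne y 0 with rfl | hy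
    · simp [v]
    · simp only [v, pin_of_ne_zero hy, if_neg hy, one_mul]
  have hr : 0 ≤ p * cosh β + (1 - p) := by nlinarith [one_le_cosh β]
  refine pow_le_Z hp0 hp1 hr (h := v) (by simp [v]) (fun x => ?_) (fun x => ?_) N
  · rcases eq_or_ne x 0 with rfl | hx
    · simp [v]
    · have h1 : (1 : ℝ) ≤ |(x : ℝ)| := by exact_mod_cast Int.one_le_abs hx
      simp only [v, if_neg hx]
      exact exp_le_one_iff.2 (mul_nonpos_of_nonneg_of_nonpos hβ (by linarith))
  · simp only [transfer, hpin]
    rcases eq_or_ne x 0 with rfl | hx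
    · norm_num [v]
      linarith
    · simp only [v, if_neg hx]
      push_cast
      linear_combination (-(p / 2)) * exp_abs_sub_one_add_exp_abs_add_one hx β

lemma cosh_condition_log_two_sub (hp1 : p ≤ 1) :
    p * (cosh (log (2 - p)) - 1) ≤ (1 - p) * (exp (log (2 - p)) - 1) := by
  have ha : 0 < 2 - p := by linarith
  rw [cosh_eq, exp_neg, exp_log ha]
  field_simp
  nlinarith [sq_nonneg (1 - p)]

lemma log_le_of_pow_le_of_tendsto {a : ℕ → ℝ} {L r : ℝ}
    (ha : Tendsto (fun N : ℕ => log (a N) / N) atTop (𝓝 L)) (hr : 0 < r) (h : ∀ N, r ^ N ≤ a N) :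
    log r ≤ L := by
  refine ge_of_tendsto ha ?_
  filter_upwards [eventually_gt_atTop 0] with N hN
  rw [le_div_iff₀ (by exact_mod_cast hN), mul_comm, ← log_pow]
  exact log_le_log (pow_pos hr N) (h N)

lemma le_log_of_le_pow_of_tendsto {a : ℕ → ℝ} {L r : ℝ}
    (ha : Tendsto (fun N : ℕ => log (a N) / N) atTop (𝓝 L)) (hpos : ∀ N, 0 < a N)
    (h : ∀ N, a N ≤ r ^ N) : L ≤ log r := by
  refine le_of_tendsto ha ?_
  filter_upwards [eventually_gt_atTop 0] with N hN
  rw [div_le_iff₀ (by exact_mod_cast hN), mul_comm, ← log_pow]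
  exact log_le_log (hpos N) (h N)

lemma nonneg_of_tendsto (hp0 : 0 ≤ p) (hp1 : p ≤ 1) (hβ : 0 ≤ β) {Fβ : ℝ}
    (hF : Tendsto (fun N : ℕ => log (Z p (fun _ => 1) β 0 N) / N) atTop (𝓝 Fβ)) : 0 ≤ Fβ := by
  simpa using log_le_of_pow_le_of_tendsto hF one_pos fun N => by
    simpa using one_le_Z hp0 hp1 hβ N

lemma add_log_le_of_tendsto (hp0 : 0 ≤ p) (hp1 : p < 1) {Fβ : ℝ}
    (hF : Tendsto (fun N : ℕ => log (Z p (fun _ => 1) β 0 N) / N) atTop (𝓝 Fβ)) :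
    β + log (1 - p) ≤ Fβ := by
  have h := log_le_of_pow_le_of_tendsto hF (mul_pos (sub_pos.2 hp1) (exp_pos β))
    (one_sub_mul_exp_pow_le_Z hp0 hp1.le)
  rwa [log_mul (sub_pos.2 hp1).ne' (exp_ne_zero β), log_exp, add_comm] at h

lemma le_log_of_tendsto (hp0 : 0 ≤ p) (hp1 : p ≤ 1) (hβ : 0 ≤ β) {Fβ : ℝ}
    (hF : Tendsto (fun N : ℕ => log (Z p (fun _ => 1) β 0 N) / N) atTop (𝓝 Fβ)) :
    Fβ ≤ log ((1 - p) * exp β + p * exp (β / 2)) :=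
  le_log_of_le_pow_of_tendsto hF (fun N => one_pos.trans_le (one_le_Z hp0 hp1 hβ N))
    (Z_le_one_sub_mul_exp_add_pow hp0 hp1 hβ)

lemma g_le_of_tendsto (hp0 : 0 ≤ p) (hp1 : p ≤ 1) (hβ : 0 ≤ β)
    (hcond : p * (cosh β - 1) ≤ (1 - p) * (exp β - 1)) {Fβ : ℝ}
    (hF : Tendsto (fun N : ℕ => log (Z p (fun _ => 1) β 0 N) / N) atTop (𝓝 Fβ)) : g p β ≤ Fβ :=
  log_le_of_pow_le_of_tendsto hF (by nlinarith [one_le_cosh β])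
    (mul_cosh_add_one_sub_pow_le_Z hp0 hp1 hβ hcond)

lemma g_nonneg (hp0 : 0 ≤ p) (y : ℝ) : 0 ≤ g p y :=
  log_nonneg (by nlinarith [one_le_cosh y])

lemma g_le_self (hp0 : 0 ≤ p) (hp1 : p ≤ 1) {y : ℝ} (hy : 0 ≤ y) : g p y ≤ y := by
  rw [g, log_le_iff_le_exp (by nlinarith [one_le_cosh y]), cosh_eq]
  nlinarith [exp_le_exp.2 (neg_le_self hy), one_le_exp hy]

lemma add_log_half_le_g (hp0 : 0 < p) (hp1 : p ≤ 1) (y : ℝ) : y + log (p / 2) ≤ g p y := by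
  rw [g, ← log_exp y, ← log_mul (exp_ne_zero _) (by positivity), log_exp y]
  refine log_le_log (by positivity) ?_
  rw [cosh_eq]
  nlinarith [exp_pos (-y)]

lemma g_strictMonoOn (hp0 : 0 < p) : StrictMonoOn (g p) (Set.Ici 0) := fun a ha b hb hab =>
  log_lt_log (by nlinarith [one_le_cosh a]) (by nlinarith [cosh_strictMonoOn ha hb hab])

section CriticalForce

variable {F ginv : ℝ → ℝ}

lemma le_ginv (hp0 : 0 ≤ p) (hp1 : p ≤ 1) (hright : ∀ x, 0 ≤ x → g p (ginv x) = x)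
    (hnonneg : ∀ x, 0 ≤ x → 0 ≤ ginv x) {x : ℝ} (hx : 0 ≤ x) : x ≤ ginv x :=
  calc x = g p (ginv x) := (hright x hx).symm
    _ ≤ ginv x := g_le_self hp0 hp1 (hnonneg x hx)

lemma ginv_le_sub_log (hp0 : 0 < p) (hp1 : p ≤ 1) (hright : ∀ x, 0 ≤ x → g p (ginv x) = x)
    {x : ℝ} (hx : 0 ≤ x) : ginv x ≤ x - log (p / 2) := by
  linarith [hright x hx ▸ add_log_half_le_g hp0 hp1 (ginv x)]

lemma le_ginv_of_g_le (hp0 : 0 < p) (hright : ∀ x, 0 ≤ x → g p (ginv x) = x)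
    (hnonneg : ∀ x, 0 ≤ x → 0 ≤ ginv x) {x y : ℝ} (hy : 0 ≤ y) (hyx : g p y ≤ x) :
    y ≤ ginv x := by
  have hx : 0 ≤ x := (g_nonneg hp0.le y).trans hyx
  rwa [← (g_strictMonoOn hp0).le_iff_le hy (hnonneg x hx), hright x hx]

lemma eventually_ginv_lt_self (hp : 2 / 3 < p) (hp1 : p < 1)
    (hF : ∀ β, 0 ≤ β → Tendsto (fun N : ℕ => log (Z p (fun _ => 1) β 0 N) / N) atTop (𝓝 (F β)))
    (hright : ∀ x, 0 ≤ x → g p (ginv x) = x) : ∀ᶠ β in atTop, ginv (F β) < β := by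
  have hp0 : 0 < p := by linarith
  have hc : 0 < p / 2 - (1 - p) := by linarith
  have hexp : Tendsto (fun β : ℝ => exp (β / 2)) atTop atTop :=
    tendsto_exp_atTop.comp (tendsto_id.atTop_div_const two_pos)
  filter_upwards [eventually_ge_atTop 0, hexp.eventually_gt_atTop (p / (p / 2 - (1 - p)))]
    with β hβ ha
  have hF0 : 0 ≤ F β := nonneg_of_tendsto hp0.le hp1.le hβ (hF β hβ)
  have hlt : (1 - p) * exp β + p * exp (β / 2) < exp β * (p / 2) := by
    rw [div_lt_iff₀ hc] at ha
    rw [show exp β = exp (β / 2) * exp (β / 2) by rw [← exp_add, add_halves]]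
    nlinarith [mul_lt_mul_of_pos_left ha (exp_pos (β / 2))]
  have hlog := log_lt_log (by positivity) hlt
  rw [log_mul (exp_ne_zero β) (by positivity), log_exp] at hlog
  calc ginv (F β) ≤ F β - log (p / 2) := ginv_le_sub_log hp0 hp1.le hright hF0
    _ < β := by linarith [le_log_of_tendsto hp0.le hp1.le hβ (hF β hβ)]

lemma tendsto_ginv_div_self (hp : 2 / 3 < p) (hp1 : p < 1)
    (hF : ∀ β, 0 ≤ β → Tendsto (fun N : ℕ => log (Z p (fun _ => 1) β 0 N) / N) atTop (𝓝 (F β)))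
    (hright : ∀ x, 0 ≤ x → g p (ginv x) = x) (hnonneg : ∀ x, 0 ≤ x → 0 ≤ ginv x) :
    Tendsto (fun β => ginv (F β) / β) atTop (𝓝 1) := by
  have hp0 : 0 < p := by linarith
  have hlow : Tendsto (fun β : ℝ => 1 + log (1 - p) / β) atTop (𝓝 1) := by
    simpa using (tendsto_const_nhds (x := (1 : ℝ))).add
      ((tendsto_const_nhds (x := log (1 - p))).div_atTop tendsto_id)
  refine tendsto_of_tendsto_of_tendsto_of_le_of_le' hlow tendsto_const_nhds ?_ ?_
  · filter_upwards [eventually_gt_atTop 0] with β hβ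
    have hF0 := nonneg_of_tendsto hp0.le hp1.le hβ.le (hF β hβ.le)
    rw [le_div_iff₀ hβ, add_mul, one_mul, div_mul_cancel₀ _ hβ.ne']
    linarith [add_log_le_of_tendsto hp0.le hp1 (hF β hβ.le), le_ginv hp0.le hp1.le hright hnonneg hF0]
  · filter_upwards [eventually_gt_atTop 0, eventually_ginv_lt_self hp hp1 hF hright]
      with β hβ hlt
    exact (div_le_one hβ).2 hlt.le

end CriticalForce

end PinningModel

open PinningModel

theorem stmt_7_general (p : ℝ) (hp : 2 / 3 < p) (hp1 : p < 1)
    (F : ℝ → ℝ)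
    (hF : ∀ β : ℝ, 0 ≤ β →
      Tendsto (fun N : ℕ => Real.log (Z p (fun _ => 1) β 0 N) / N) atTop (nhds (F β)))
    (ginv : ℝ → ℝ)
    (hginv_right : ∀ x : ℝ, 0 ≤ x → g p (ginv x) = x)
    (hginv_nonneg : ∀ x : ℝ, 0 ≤ x → 0 ≤ ginv x) :
    ∃ β₁ β₂ β₃ : ℝ, 0 < β₁ ∧ β₁ < β₂ ∧ β₂ < β₃ ∧
      ginv (F β₂) / β₂ < ginv (F β₁) / β₁ ∧
      ginv (F β₂) / β₂ < ginv (F β₃) / β₃ := by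
  have hp0 : 0 < p := by linarith
  have hβ₁ : 0 < log (2 - p) := log_pos (by linarith)
  have hfc₁ : 1 ≤ ginv (F (log (2 - p))) / log (2 - p) := by
    rw [one_le_div hβ₁]
    exact le_ginv_of_g_le hp0 hginv_right hginv_nonneg hβ₁.le
      (g_le_of_tendsto hp0.le hp1.le hβ₁.le (cosh_condition_log_two_sub hp1.le) (hF _ hβ₁.le))
  obtain ⟨β₂, hβ₁₂, hβ₂⟩ :=
    ((eventually_gt_atTop _).and (eventually_ginv_lt_self hp hp1 hF hginv_right)).exists
  have hfc₂ : ginv (F β₂) / β₂ < 1 := (div_lt_one (hβ₁.trans hβ₁₂)).2 hβ₂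
  obtain ⟨β₃, hβ₂₃, hfc₃⟩ := ((eventually_gt_atTop β₂).and
    ((tendsto_ginv_div_self hp hp1 hF hginv_right hginv_nonneg).eventually
      (lt_mem_nhds hfc₂))).exists
  exact ⟨_, β₂, β₃, hβ₁, hβ₁₂, hβ₂₃, hfc₂.trans_le hfc₁, hfc₃⟩

/-- for the homogeneous model with `2/3 < p < 1`, the critical force
`f_c(β) = (1/β) g⁻¹(F(β))` is re-entrant: there are `0 < β₁ < β₂ < β₃` with
`f_c(β₁) > f_c(β₂)` and `f_c(β₂) < f_c(β₃)`. -/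
theorem stmt_7 (p : ℝ) (hp : 2 / 3 < p) (hp1 : p < 1)
    (F : ℝ → ℝ)
    (hF : ∀ β : ℝ, 0 ≤ β →
      Tendsto (fun N : ℕ => Real.log (Z p (fun _ => 1) β 0 N) / N) atTop (nhds (F β)))
    (ginv : ℝ → ℝ)
    (hginv_left : ∀ y : ℝ, 0 ≤ y → ginv (g p y) = y)
    (hginv_right : ∀ x : ℝ, 0 ≤ x → g p (ginv x) = x)
    (hginv_nonneg : ∀ x : ℝ, 0 ≤ x → 0 ≤ ginv x) :
    ∃ β₁ β₂ β₃ : ℝ, 0 < β₁ ∧ β₁ < β₂ ∧ β₂ < β₃ ∧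
      ginv (F β₂) / β₂ < ginv (F β₁) / β₁ ∧
      ginv (F β₂) / β₂ < ginv (F β₃) / β₃ :=
  stmt_7_general p hp hp1 F hF ginv hginv_right hginv_nonneg
end
end

section
/- Let S = (S_n)_{n\ge 0} be the simple random walk on \mathbb{Z}^2 started at 0, and let S_n^{(1)} denote the first coordinate of S_n. For every y \in \mathbb{R}, \lim_{N\to\infty} (1/N) \log E[\exp(y S_N^{(1)}) \, ; \, S_n \ne 0 \text{ for all } n = 1,\dots,N] = \log\big( (\cosh(y) + 1)/2 \big). -/
open Filter Finset

noncomputable section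
open scoped Classical

/-- The four possible increments of the simple random walk on `ℤ²`. -/
def step2 : Fin 4 → ℤ × ℤ := ![(1, 0), (-1, 0), (0, 1), (0, -1)]

/-- Position of the two-dimensional walk after `n` steps, given the increments `ξ`. -/
def pos2 {N : ℕ} (ξ : Fin N → Fin 4) (n : ℕ) : ℤ × ℤ :=
  ∑ i : Fin N, if (i : ℕ) < n then step2 (ξ i) else 0

/-- The pinning partition function of the `(2+1)`-dimensional model with charges
`ω`, inverse temperature `β` and force `f` pulling in the first direction. -/
def Z2 (ω : ℕ → ℝ) (β f : ℝ) (N : ℕ) : ℝ :=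
  ∑ ξ : Fin N → Fin 4,
    (1 / 4 : ℝ) ^ N *
      Real.exp (β * ∑ n ∈ Finset.Icc 1 N, (if pos2 ξ n = 0 then ω n else 0)
        + β * f * (((pos2 ξ N).1 : ℤ) : ℝ))

/-- `g₂(y) = log((cosh y + 1)/2)`. -/
def g2 (y : ℝ) : ℝ := Real.log ((Real.cosh y + 1) / 2)

/-- `K(n) = P(τ = n)`, the law of the first return time to the origin of the
simple random walk on `ℤ²`. -/
def K2 (n : ℕ) : ℝ :=
  ∑ ξ : Fin n → Fin 4,
    if 1 ≤ n ∧ (∀ m ∈ Finset.Ico 1 n, pos2 ξ m ≠ 0) ∧ pos2 ξ n = 0 then (1 / 4 : ℝ) ^ n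
    else 0

/-- `E[exp(y S_N^{(1)}); S_n ≠ 0 for n = 1, …, N]` for the simple random walk on `ℤ²`. -/
def Zfree2 (y : ℝ) (N : ℕ) : ℝ :=
  ∑ ξ : Fin N → Fin 4,
    if ∀ n ∈ Finset.Icc 1 N, pos2 ξ n ≠ 0 then
      (1 / 4 : ℝ) ^ N * Real.exp (y * (((pos2 ξ N).1 : ℤ) : ℝ))
    else 0

/-
Write `Z_N(y) = Zfree2 y N`, `S¹` for the first coordinate of the walk and
`M(y) = (cosh y + 1)/2 = E[e^{y S¹_1}]`. Dropping the constraint gives `Z_N(y) ≤ M(y)^N`.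
For `y > 0`, tilt each step by `e^{y S¹}/M(y)`: under the tilted law `e^{-y S¹}` is a
supermartingale, so the tilted walk started at `1` stays positive with probability at least
`1 - e^{-y}`, and a walk whose first coordinate stays positive never returns to the origin; hence
`Z_N(y) ≥ c M(y)^N` with `c > 0`. The reflection `x ↦ -x` gives `Z_N(-y) = Z_N(y)`, and at `y = 0`
the bound `S¹_N ≤ N` gives `Z_N(0) ≥ e^{-yN} Z_N(y) ≥ c e^{-yN}` for every `y > 0`.
-/

section Walk

variable {α M N : Type*} [AddCommMonoid M] [AddCommMonoid N]

def walk (d : α → M) {m : ℕ} (η : Fin m → α) (n : ℕ) : M :=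
  ∑ i : Fin m, if (i : ℕ) < n then d (η i) else 0

variable (d : α → M) {m : ℕ} (η : Fin m → α)

@[simp]
theorem walk_zero : walk d η 0 = 0 := by
  simp [walk]

theorem walk_cons_succ (s : α) (n : ℕ) :
    walk d (Fin.cons s η : Fin (m + 1) → α) (n + 1) = d s + walk d η n := by
  simp [walk, Fin.sum_univ_succ]

theorem walk_of_le {n : ℕ} (h : m ≤ n) : walk d η n = ∑ i, d (η i) :=
  Finset.sum_congr rfl fun i _ => if_pos (i.isLt.trans_le h)

theorem map_walk {F : Type*} [FunLike F M N] [AddMonoidHomClass F M N] (f : F) (n : ℕ) :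
    f (walk d η n) = walk (f ∘ d) η n := by
  simp only [walk, map_sum, apply_ite f, map_zero, Function.comp_apply]

end Walk

theorem Fintype.sum_fin_succ_pi {α R : Type*} [Fintype α] [AddCommMonoid R] {m : ℕ}
    (f : (Fin (m + 1) → α) → R) :
    ∑ ξ, f ξ = ∑ s, ∑ η : Fin m → α, f (Fin.cons s η) := by
  rw [← Fintype.sum_prod_type']
  exact (Fintype.sum_equiv (Fin.consEquiv fun _ => α) _ _ fun _ => rfl).symm

section Survival

variable {α : Type*} [Fintype α] (d : α → ℤ) (w : α → ℝ)

def survivalWeight (j : ℤ) (m : ℕ) : ℝ :=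
  ∑ η : Fin m → α, if ∀ n ≤ m, 0 < j + walk d η n then ∏ i, w (η i) else 0

theorem survivalWeight_zero (j : ℤ) : survivalWeight d w j 0 = if 0 < j then 1 else 0 := by
  simp only [survivalWeight, Fintype.sum_unique, Nat.le_zero, forall_eq, walk_zero, add_zero,
    Finset.univ_eq_empty, Finset.prod_empty]

theorem survivalWeight_succ_of_pos {j : ℤ} (hj : 0 < j) (m : ℕ) :
    survivalWeight d w j (m + 1) = ∑ s, w s * survivalWeight d w (j + d s) m := by
  rw [survivalWeight, Fintype.sum_fin_succ_pi]
  refine Finset.sum_congr rfl fun s _ => ?_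
  rw [survivalWeight, Finset.mul_sum]
  refine Finset.sum_congr rfl fun η _ => ?_
  have hcond : (∀ n ≤ m + 1, 0 < j + walk d (Fin.cons s η : Fin (m + 1) → α) n) ↔
      ∀ n ≤ m, 0 < j + d s + walk d η n := by
    simp only [← Nat.lt_succ_iff, Nat.forall_lt_succ_left, walk_zero, walk_cons_succ, add_zero,
      hj, true_and, add_assoc]
  rw [mul_ite, mul_zero, Fin.prod_univ_succ]
  exact if_congr hcond (by simp) rfl

variable {d w}

theorem survivalWeight_nonneg (hw : ∀ s, 0 ≤ w s) (j : ℤ) (m : ℕ) :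
    0 ≤ survivalWeight d w j m :=
  Finset.sum_nonneg fun _ _ => by
    split_ifs
    exacts [Finset.prod_nonneg fun i _ => hw _, le_rfl]

/-- Gambler's ruin bound: `e^{-y (j + S_n)}` is a supermartingale for the normalised weights. -/
theorem one_sub_exp_mul_pow_le_survivalWeight {y : ℝ} (hy : 0 ≤ y) (hw : ∀ s, 0 ≤ w s)
    (hd : ∑ s, w s * Real.exp (-(y * d s)) ≤ ∑ s, w s) (m : ℕ) (j : ℤ) :
    (1 - Real.exp (-(y * j))) * (∑ s, w s) ^ m ≤ survivalWeight d w j m := by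
  have hW : 0 ≤ ∑ s, w s := Finset.sum_nonneg fun s _ => hw s
  have of_nonpos : ∀ k (j : ℤ), j ≤ 0 →
      (1 - Real.exp (-(y * j))) * (∑ s, w s) ^ k ≤ survivalWeight d w j k := fun k j hj => by
    have : 1 ≤ Real.exp (-(y * j)) :=
      Real.one_le_exp (by nlinarith [show (j : ℝ) ≤ 0 by exact_mod_cast hj])
    exact (mul_nonpos_of_nonpos_of_nonneg (by linarith) (pow_nonneg hW k)).trans
      (survivalWeight_nonneg hw j k)
  induction m generalizing j with
  | zero =>
    obtain hj | hj := le_or_gt j 0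
    · exact of_nonpos 0 j hj
    · simp [survivalWeight_zero, hj, (Real.exp_pos _).le]
  | succ m ih =>
    obtain hj | hj := le_or_gt j 0
    · exact of_nonpos _ j hj
    rw [survivalWeight_succ_of_pos d w hj]
    have hsplit : ∀ s, Real.exp (-(y * ↑(j + d s))) = Real.exp (-(y * j)) * Real.exp (-(y * d s)) :=
      fun s => by rw [← Real.exp_add]; push_cast; ring_nf
    calc (1 - Real.exp (-(y * j))) * (∑ s, w s) ^ (m + 1)
        ≤ (∑ s, w s) ^ m * (∑ s, w s) -
            Real.exp (-(y * j)) * (∑ s, w s) ^ m * ∑ s, w s * Real.exp (-(y * d s)) := by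
          have := mul_le_mul_of_nonneg_left hd
            (mul_nonneg (Real.exp_pos (-(y * j))).le (pow_nonneg hW m))
          rw [pow_succ]; linarith
      _ = ∑ s, w s * ((1 - Real.exp (-(y * ↑(j + d s)))) * (∑ s, w s) ^ m) := by
          simp only [hsplit, Finset.mul_sum, ← Finset.sum_sub_distrib]
          exact Finset.sum_congr rfl fun s _ => by ring
      _ ≤ ∑ s, w s * survivalWeight d w (j + d s) m :=
          Finset.sum_le_sum fun s _ => mul_le_mul_of_nonneg_left (ih _) (hw s)

theorem tendsto_log_div_of_exp_mul_le {u : ℕ → ℝ} {M : ℝ} (hup : ∀ N, u N ≤ M ^ N)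
    (hlow : ∀ L < Real.log M, ∃ c > 0, ∀ᶠ N : ℕ in atTop, c * Real.exp (L * N) ≤ u N) :
    Tendsto (fun N : ℕ => Real.log (u N) / N) atTop (nhds (Real.log M)) := by
  have log_lower (c L : ℝ) (N : ℕ) (hc : 0 < c) (hN : 0 < N) (h : c * Real.exp (L * N) ≤ u N) :
      Real.log c / N + L ≤ Real.log (u N) / N := by
    have hN' : (0 : ℝ) < N := by exact_mod_cast hN
    calc Real.log c / N + L = Real.log (c * Real.exp (L * N)) / N := by
          rw [Real.log_mul hc.ne' (Real.exp_pos _).ne', Real.log_exp]; field_simp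
      _ ≤ Real.log (u N) / N := by gcongr
  refine tendsto_order.2 ⟨fun a ha => ?_, fun b hb => ?_⟩
  · obtain ⟨c, hc, hcu⟩ := hlow ((a + Real.log M) / 2) (by linarith)
    have hsmall := (tendsto_const_div_atTop_nhds_zero_nat (Real.log c)).eventually
      (lt_mem_nhds (show (a - Real.log M) / 2 < 0 by linarith))
    filter_upwards [hcu, hsmall, eventually_gt_atTop 0] with N hN hcN hN0
    linarith [log_lower _ _ _ hc hN0 hN]
  · obtain ⟨c, hc, hcu⟩ := hlow (Real.log M - 1) (by linarith)
    filter_upwards [hcu, eventually_gt_atTop 0] with N hN hN0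
    have hu : 0 < u N := lt_of_lt_of_le (by positivity) hN
    calc Real.log (u N) / N ≤ Real.log (M ^ N) / N := by
          gcongr; exact hup N
      _ = Real.log M := by rw [Real.log_pow]; field_simp
      _ < b := hb

def tilt (y : ℝ) (s : Fin 4) : ℝ := Real.exp (y * (step2 s).1) / 4

theorem tilt_pos (y : ℝ) (s : Fin 4) : 0 < tilt y s := by
  unfold tilt; positivity

theorem sum_tilt (y : ℝ) : ∑ s, tilt y s = (Real.cosh y + 1) / 2 := by
  simp only [tilt, step2, Fin.sum_univ_four, Matrix.cons_val_zero, Matrix.cons_val_one,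
    Matrix.cons_val, Int.cast_one, Int.cast_neg, Int.cast_zero, mul_one, mul_neg, mul_zero,
    Real.exp_zero, Real.cosh_eq]
  ring

theorem one_le_sum_tilt (y : ℝ) : 1 ≤ ∑ s, tilt y s := by
  rw [sum_tilt]; linarith [Real.one_le_cosh y]

theorem fst_pos2 {N : ℕ} (ξ : Fin N → Fin 4) (n : ℕ) :
    (pos2 ξ n).1 = walk (fun s => (step2 s).1) ξ n :=
  map_walk step2 ξ (AddMonoidHom.fst ℤ ℤ) n

theorem Zfree2_eq_sum_prod (y : ℝ) (N : ℕ) :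
    Zfree2 y N = ∑ ξ : Fin N → Fin 4,
      if ∀ n ∈ Icc 1 N, pos2 ξ n ≠ 0 then ∏ i, tilt y (ξ i) else 0 := by
  refine Finset.sum_congr rfl fun ξ _ => ?_
  split_ifs
  · rw [fst_pos2, walk_of_le _ _ le_rfl]
    simp only [tilt, Finset.prod_div_distrib, ← Real.exp_sum, Finset.mul_sum, Int.cast_sum,
      Finset.prod_const, Finset.card_univ, Fintype.card_fin, one_div, inv_pow]
    ring
  · rfl

theorem Zfree2_le (y : ℝ) (N : ℕ) : Zfree2 y N ≤ ((Real.cosh y + 1) / 2) ^ N := by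
  rw [Zfree2_eq_sum_prod, ← sum_tilt, Fintype.sum_pow]
  refine Finset.sum_le_sum fun ξ _ => ?_
  split_ifs
  exacts [le_rfl, Finset.prod_nonneg fun i _ => (tilt_pos y _).le]

/-- Walks whose first step is to the right and whose first coordinate then stays positive never
return to the origin. -/
theorem tilt_mul_survivalWeight_le_Zfree2 (y : ℝ) (m : ℕ) :
    tilt y 0 * survivalWeight (fun s => (step2 s).1) (tilt y) 1 m ≤ Zfree2 y (m + 1) := by
  have hnonneg : ∀ {N : ℕ} (ξ : Fin N → Fin 4),
      0 ≤ if ∀ n ∈ Icc 1 N, pos2 ξ n ≠ 0 then ∏ i, tilt y (ξ i) else 0 := fun ξ => by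
    split_ifs
    exacts [Finset.prod_nonneg fun i _ => (tilt_pos y _).le, le_rfl]
  rw [Zfree2_eq_sum_prod, Fintype.sum_fin_succ_pi, survivalWeight, Finset.mul_sum]
  refine le_trans ?_ (Finset.single_le_sum (fun s _ => Finset.sum_nonneg fun η _ => hnonneg _)
    (Finset.mem_univ 0))
  refine Finset.sum_le_sum fun η _ => ?_
  split_ifs with hpos hgood
  · rw [Fin.prod_univ_succ]; simp
  · refine absurd (fun n hn => ?_) hgood
    obtain ⟨k, rfl⟩ := Nat.exists_eq_add_of_le' (Finset.mem_Icc.1 hn).1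
    have hk := hpos k (by simpa using (Finset.mem_Icc.1 hn).2)
    intro h0
    have := congrArg Prod.fst h0
    rw [fst_pos2, walk_cons_succ] at this
    exact hk.ne' this
  · simpa using Finset.prod_nonneg fun i _ => (tilt_pos y _).le
  · simp

theorem exp_sub_one_div_four_mul_pow_le_Zfree2 {y : ℝ} (hy : 0 ≤ y) (m : ℕ) :
    (Real.exp y - 1) / 4 * ((Real.cosh y + 1) / 2) ^ m ≤ Zfree2 y (m + 1) := by
  have hdrift : ∑ s, tilt y s * Real.exp (-(y * (step2 s).1)) ≤ ∑ s, tilt y s := by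
    have : ∀ s, tilt y s * Real.exp (-(y * (step2 s).1)) = 1 / 4 := fun s => by
      rw [tilt, div_mul_eq_mul_div, ← Real.exp_add, add_neg_cancel, Real.exp_zero]
    simpa [this] using one_le_sum_tilt y
  have hsurv := one_sub_exp_mul_pow_le_survivalWeight hy (fun s => (tilt_pos y s).le) hdrift m 1
  rw [sum_tilt, Int.cast_one, mul_one] at hsurv
  calc (Real.exp y - 1) / 4 * ((Real.cosh y + 1) / 2) ^ m
      = tilt y 0 * ((1 - Real.exp (-y)) * ((Real.cosh y + 1) / 2) ^ m) := by
        rw [tilt, show (step2 0).1 = 1 from rfl, Int.cast_one, mul_one, Real.exp_neg]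
        field_simp
    _ ≤ tilt y 0 * survivalWeight (fun s => (step2 s).1) (tilt y) 1 m := by
        gcongr; exact (tilt_pos y 0).le
    _ ≤ Zfree2 y (m + 1) := tilt_mul_survivalWeight_le_Zfree2 y m

theorem Zfree2_le_exp_pow_mul_Zfree2_zero {y : ℝ} (hy : 0 ≤ y) (N : ℕ) :
    Zfree2 y N ≤ Real.exp y ^ N * Zfree2 0 N := by
  have htilt : ∀ s, tilt y s ≤ Real.exp y * tilt 0 s := fun s => by
    have : (step2 s).1 ≤ 1 := by fin_cases s <;> decide
    simp only [tilt, zero_mul, Real.exp_zero, mul_one_div]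
    gcongr
    nlinarith [show ((step2 s).1 : ℝ) ≤ 1 by exact_mod_cast this]
  rw [Zfree2_eq_sum_prod, Zfree2_eq_sum_prod, Finset.mul_sum]
  refine Finset.sum_le_sum fun ξ _ => ?_
  split_ifs
  · calc ∏ i, tilt y (ξ i) ≤ ∏ i, (Real.exp y * tilt 0 (ξ i)) :=
          Finset.prod_le_prod (fun i _ => (tilt_pos y _).le) fun i _ => htilt _
      _ = Real.exp y ^ N * ∏ i, tilt 0 (ξ i) := by
          rw [Finset.prod_mul_distrib, Finset.prod_const, Finset.card_univ, Fintype.card_fin]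
  · rw [mul_zero]

theorem pos2_swap {N : ℕ} (ξ : Fin N → Fin 4) (n : ℕ) :
    pos2 (Equiv.swap 0 1 ∘ ξ) n = ((AddEquiv.neg ℤ).prodCongr (AddEquiv.refl ℤ)) (pos2 ξ n) := by
  have hstep : step2 ∘ Equiv.swap 0 1 = (AddEquiv.neg ℤ).prodCongr (AddEquiv.refl ℤ) ∘ step2 := by
    funext s; fin_cases s <;> rfl
  change walk step2 (Equiv.swap 0 1 ∘ ξ) n =
    (AddEquiv.neg ℤ).prodCongr (AddEquiv.refl ℤ) (walk step2 ξ n)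
  rw [map_walk, ← hstep]
  rfl

theorem Zfree2_neg (y : ℝ) (N : ℕ) : Zfree2 (-y) N = Zfree2 y N := by
  have hswap : Function.Involutive fun ξ : Fin N → Fin 4 => Equiv.swap 0 1 ∘ ξ :=
    fun ξ => funext fun i => Equiv.swap_apply_self _ _ _
  refine Fintype.sum_bijective _ hswap.bijective _ _ fun ξ => ?_
  simp only [pos2_swap, ne_eq, EmbeddingLike.map_eq_zero_iff]
  split_ifs
  · change _ = _ * Real.exp (y * ((-(pos2 ξ N).1 : ℤ) : ℝ))
    push_cast; ring_nf
  · rfl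

theorem tendsto_log_Zfree2_div_of_pos {y : ℝ} (hy : 0 < y) :
    Tendsto (fun N : ℕ => Real.log (Zfree2 y N) / N) atTop
      (nhds (Real.log ((Real.cosh y + 1) / 2))) := by
  set M := (Real.cosh y + 1) / 2 with hM_def
  have hM : 0 < M := by rw [hM_def]; linarith [Real.one_le_cosh y]
  have hc : 0 < (Real.exp y - 1) / 4 := by linarith [Real.add_one_lt_exp hy.ne']
  refine tendsto_log_div_of_exp_mul_le (Zfree2_le y) fun L hL => ⟨(Real.exp y - 1) / 4 / M,
    by positivity, ?_⟩
  filter_upwards [eventually_ge_atTop 1] with N hN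
  obtain ⟨m, rfl⟩ := Nat.exists_eq_add_of_le' hN
  calc (Real.exp y - 1) / 4 / M * Real.exp (L * ↑(m + 1))
      ≤ (Real.exp y - 1) / 4 / M * M ^ (m + 1) := by
        rw [mul_comm L, Real.exp_nat_mul]
        gcongr
        exact ((Real.lt_log_iff_exp_lt hM).1 hL).le
    _ = (Real.exp y - 1) / 4 * M ^ m := by field_simp; ring
    _ ≤ Zfree2 y (m + 1) := exp_sub_one_div_four_mul_pow_le_Zfree2 hy.le m

theorem tendsto_log_Zfree2_zero_div :
    Tendsto (fun N : ℕ => Real.log (Zfree2 0 N) / N) atTop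
      (nhds (Real.log ((Real.cosh 0 + 1) / 2))) := by
  refine tendsto_log_div_of_exp_mul_le (Zfree2_le 0) fun L hL => ?_
  norm_num at hL
  have hc : 0 < (Real.exp (-L) - 1) / 4 := by linarith [Real.add_one_lt_exp (neg_pos.2 hL).ne']
  refine ⟨(Real.exp (-L) - 1) / 4, hc, ?_⟩
  filter_upwards [eventually_ge_atTop 1] with N hN
  obtain ⟨m, rfl⟩ := Nat.exists_eq_add_of_le' hN
  have hZ : (Real.exp (-L) - 1) / 4 ≤ Real.exp (-L) ^ (m + 1) * Zfree2 0 (m + 1) :=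
    calc (Real.exp (-L) - 1) / 4
        ≤ (Real.exp (-L) - 1) / 4 * ((Real.cosh (-L) + 1) / 2) ^ m := by
          refine le_mul_of_one_le_right hc.le (one_le_pow₀ ?_)
          rw [← sum_tilt]; exact one_le_sum_tilt _
      _ ≤ Zfree2 (-L) (m + 1) := exp_sub_one_div_four_mul_pow_le_Zfree2 (by linarith) m
      _ ≤ Real.exp (-L) ^ (m + 1) * Zfree2 0 (m + 1) :=
          Zfree2_le_exp_pow_mul_Zfree2_zero (by linarith) _
  calc (Real.exp (-L) - 1) / 4 * Real.exp (L * ↑(m + 1))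
      ≤ Real.exp (-L) ^ (m + 1) * Zfree2 0 (m + 1) * Real.exp (L * ↑(m + 1)) := by gcongr
    _ = Zfree2 0 (m + 1) := by
        rw [← Real.exp_nat_mul, mul_right_comm, ← Real.exp_add]
        ring_nf; rw [Real.exp_zero, one_mul]

/-- for the simple random walk on `ℤ²`,
`(1/N) log E[exp(y S_N^{(1)}); S_n ≠ 0, n = 1,…,N] → log((cosh y + 1)/2)`. -/
theorem stmt_17 (y : ℝ) :
    Tendsto (fun N : ℕ => Real.log (Zfree2 y N) / N) atTop
      (nhds (Real.log ((Real.cosh y + 1) / 2))) := by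
  rcases lt_trichotomy y 0 with hy | rfl | hy
  · simpa only [Zfree2_neg, Real.cosh_neg] using tendsto_log_Zfree2_div_of_pos (neg_pos.2 hy)
  · exact tendsto_log_Zfree2_zero_div
  · exact tendsto_log_Zfree2_div_of_pos hy
end Survival
end
end
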